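/- arXiv:2503.19141 — 6 statements merged into one kernel-verified Lean document; each statement's English description precedes it below -/
import Mathlib

section
/- For every integer j with 0 ≤ j ≤ N−1, the trace of ξ^j is given by: Tr(ξ^j) = (ℓ−1)ℓ^{m−1} (as an element of F_p) if j = 0; Tr(ξ^j) = −(ℓ−1)ℓ^{m−1} if j = ℓ^m; Tr(ξ^j) = −ℓ^{m−1} if j ∈ J_1^{(3)} ∪ J_3^{(3)}; Tr(ξ^j) = ℓ^{m−1} if j ∈ J_1^{(2)} ∪ J_3^{(2)}; and Tr(ξ^j) = 0 in all other cases. -/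
/-!
Because `p` generates `(ℤ/N)ˣ`, the Frobenius conjugates `ξ^(j p^i)`, `i < e`, of `ξ^j` are the
`ξ^(j a)` with `a` coprime to `N`, so `Tr(ξ^j)` is the Ramanujan sum `c_N(j)`. Inclusion–exclusion
over the primes `2` and `ℓ` evaluates it through geometric sums over the multiples of `1, 2, ℓ, 2ℓ`;
it vanishes unless `ℓ^(m-1) ∣ j`, and for `j = t ℓ^(m-1)` with `t < 2ℓ` its value depends only on
whether `t ∈ {0, ℓ}` and on the parity of `t`.
-/

open Finset
open scoped Nat

theorem Finset.sum_filter_not_and_not {ι M : Type*} [AddCommGroup M] (s : Finset ι)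
    (P Q : ι → Prop) [DecidablePred P] [DecidablePred Q] (f : ι → M) :
    ∑ a ∈ s with ¬P a ∧ ¬Q a, f a =
      ∑ a ∈ s, f a - ∑ a ∈ s with P a, f a - ∑ a ∈ s with Q a, f a
        + ∑ a ∈ s with P a ∧ Q a, f a := by
  simp only [sum_filter, ← sum_sub_distrib, ← sum_add_distrib]
  refine sum_congr rfl fun a _ ↦ ?_
  by_cases hP : P a <;> by_cases hQ : Q a <;> simp [hP, hQ]

theorem Nat.dvd_pow_orderOf_sub_one {p : ℕ} (hp : 0 < p) (N : ℕ) :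
    N ∣ p ^ orderOf (p : ZMod N) - 1 := by
  refine (Nat.modEq_iff_dvd' (Nat.one_le_pow _ _ hp)).mp ?_
  rw [← ZMod.natCast_eq_natCast_iff, Nat.cast_pow, pow_orderOf_eq_one, Nat.cast_one]

theorem sum_range_totient_pow_eq_sum_coprime {M : Type*} [AddCommMonoid M] {N p : ℕ}
    (hN : 0 < N) (hp : orderOf (p : ZMod N) = φ N) (f : ℕ → M) (hf : ∀ a, f (a % N) = f a) :
    ∑ i ∈ range (φ N), f (p ^ i) = ∑ a ∈ range N with N.Coprime a, f a := by
  have hunit : IsUnit (p : ZMod N) :=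
    (orderOf_pos_iff.mp (hp ▸ Nat.totient_pos.mpr hN)).isUnit
  have hinj : Set.InjOn (fun i ↦ p ^ i % N) (range (φ N)) := by
    intro i hi j hj hij
    refine pow_injOn_Iio_orderOf (x := (p : ZMod N)) (by simpa [hp] using hi)
      (by simpa [hp] using hj) ?_
    simpa using (ZMod.natCast_eq_natCast_iff' _ _ N).mpr hij
  have himage : (range (φ N)).image (fun i ↦ p ^ i % N) = {a ∈ range N | N.Coprime a} := by
    refine eq_of_subset_of_card_le (fun a ha ↦ ?_) ?_
    · obtain ⟨i, -, rfl⟩ := mem_image.mp ha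
      refine mem_filter.mpr ⟨mem_range.mpr (Nat.mod_lt _ hN), Nat.Coprime.symm ?_⟩
      rw [← ZMod.isUnit_iff_coprime, ZMod.natCast_mod, Nat.cast_pow]
      exact hunit.pow i
    · rw [card_image_of_injOn hinj, card_range, Nat.totient]
  rw [← himage, sum_image hinj]
  exact sum_congr rfl fun i _ ↦ (hf _).symm

theorem FiniteField.algebraMap_trace_eq_sum_pow_of_card_eq {p e : ℕ} [Fact p.Prime]
    {F : Type*} [Field F] [Fintype F] [Algebra (ZMod p) F] (hF : Fintype.card F = p ^ e)
    (x : F) : algebraMap (ZMod p) F (Algebra.trace (ZMod p) F x) = ∑ i ∈ range e, x ^ p ^ i := by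
  have hrank : Module.finrank (ZMod p) F = e := by
    refine Nat.pow_right_injective (Fact.out : p.Prime).two_le ?_
    change p ^ _ = p ^ e
    rw [← hF, Module.card_eq_pow_finrank (K := ZMod p), ZMod.card]
  rw [algebraMap_trace_eq_sum_pow, hrank, Nat.card_zmod]

theorem FiniteField.isPrimitiveRoot_pow_div {F : Type*} [Field F] [Fintype F] {g : Fˣ}
    (hg : ∀ x : Fˣ, ∃ k : ℕ, x = g ^ k) {N : ℕ} (hN : N ∣ Fintype.card F - 1) :
    IsPrimitiveRoot ((g : F) ^ ((Fintype.card F - 1) / N)) N := by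
  classical
  have hg' : IsPrimitiveRoot (g : F) (Fintype.card F - 1) := by
    rw [IsPrimitiveRoot.coe_units_iff, ← Fintype.card_units, ← Nat.card_eq_fintype_card,
      ← orderOf_eq_card_of_forall_mem_zpowers fun x ↦ ?_]
    · exact IsPrimitiveRoot.orderOf g
    · obtain ⟨k, rfl⟩ := hg x
      exact ⟨k, zpow_natCast g k⟩
  exact hg'.pow (Nat.sub_pos_of_lt Fintype.one_lt_card) (Nat.div_mul_cancel hN).symm

theorem IsPrimitiveRoot.sum_filter_dvd_pow_pow {R : Type*} [CommRing R] [IsDomain R] {ξ : R}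
    {d k : ℕ} (hd : 0 < d) (hξ : IsPrimitiveRoot ξ (d * k)) (j : ℕ) :
    ∑ a ∈ range (d * k) with d ∣ a, (ξ ^ j) ^ a = if k ∣ j then (k : R) else 0 := by
  have himage : (range k).image (d * ·) = {a ∈ range (d * k) | d ∣ a} := by
    ext a
    simp only [mem_image, mem_filter, mem_range]
    constructor
    · rintro ⟨b, hb, rfl⟩
      exact ⟨Nat.mul_lt_mul_of_pos_left hb hd, dvd_mul_right d b⟩
    · rintro ⟨ha, b, rfl⟩
      exact ⟨b, Nat.lt_of_mul_lt_mul_left ha, rfl⟩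
  rw [← himage, sum_image fun a _ b _ h ↦ Nat.eq_of_mul_eq_mul_left hd h]
  set y := (ξ ^ d) ^ j
  have hy (b : ℕ) : (ξ ^ j) ^ (d * b) = y ^ b := by ring
  simp only [hy]
  rcases k.eq_zero_or_pos with rfl | hk
  · simp
  have hy1 : y = 1 ↔ k ∣ j := (hξ.pow (by positivity) rfl).pow_eq_one_iff_dvd j
  split_ifs with hkj
  · simp [hy1.mpr hkj]
  · have hyk : y ^ k = 1 := by
      rw [← pow_mul, ← pow_mul, hξ.pow_eq_one_iff_dvd]
      exact ⟨j, by ring⟩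
    have := geom_sum_mul y k
    rw [hyk, sub_self, mul_eq_zero] at this
    exact this.resolve_right (sub_ne_zero.mpr (mt hy1.mp hkj))

theorem Nat.Prime.coprime_two_mul_pow_iff {ℓ : ℕ} (hℓ : ℓ.Prime) (n a : ℕ) :
    (2 * ℓ ^ (n + 1)).Coprime a ↔ ¬2 ∣ a ∧ ¬ℓ ∣ a := by
  rw [Nat.coprime_mul_iff_left, Nat.coprime_pow_left_iff n.succ_pos,
    Nat.prime_two.coprime_iff_not_dvd, hℓ.coprime_iff_not_dvd]

theorem two_dvd_and_dvd_iff {ℓ : ℕ} (hℓ : ¬2 ∣ ℓ) (a : ℕ) : 2 ∣ a ∧ ℓ ∣ a ↔ 2 * ℓ ∣ a :=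
  ⟨fun h ↦ (Nat.prime_two.coprime_iff_not_dvd.mpr hℓ).mul_dvd_of_dvd_of_dvd h.1 h.2,
    fun h ↦ ⟨(dvd_mul_right 2 ℓ).trans h, (dvd_mul_left ℓ 2).trans h⟩⟩

theorem Nat.Prime.not_two_dvd_of_totient_two_mul_pow {ℓ n : ℕ} (hℓ : ℓ.Prime)
    (h : φ (2 * ℓ ^ (n + 1)) = (ℓ - 1) * ℓ ^ n) : ¬2 ∣ ℓ := by
  rintro h2
  obtain rfl := ((Nat.prime_dvd_prime_iff_eq Nat.prime_two hℓ).mp h2).symm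
  rw [← pow_succ', Nat.totient_prime_pow Nat.prime_two n.succ.succ_pos] at h
  simp at h

/-- The Ramanujan sum `c_N(j)` for `N = 2 ℓ^(n+1)`, written via inclusion–exclusion over `2, ℓ`. -/
def ramanujanSumTwoPrimePow (ℓ n j : ℕ) : ℤ :=
  (if 2 * ℓ ^ (n + 1) ∣ j then 2 * ℓ ^ (n + 1) else 0)
    - (if ℓ ^ (n + 1) ∣ j then ℓ ^ (n + 1) else 0)
    - (if 2 * ℓ ^ n ∣ j then 2 * ℓ ^ n else 0)
    + (if ℓ ^ n ∣ j then ℓ ^ n else 0)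

theorem IsPrimitiveRoot.sum_coprime_pow_pow {R : Type*} [CommRing R] [IsDomain R] {ξ : R}
    {ℓ n : ℕ} (hℓ : ℓ.Prime) (hodd : ¬2 ∣ ℓ) (hξ : IsPrimitiveRoot ξ (2 * ℓ ^ (n + 1)))
    (j : ℕ) :
    ∑ a ∈ range (2 * ℓ ^ (n + 1)) with (2 * ℓ ^ (n + 1)).Coprime a, (ξ ^ j) ^ a
      = ramanujanSumTwoPrimePow ℓ n j := by
  have hsum (d k : ℕ) (hd : 0 < d) (hdk : 2 * ℓ ^ (n + 1) = d * k) :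
      ∑ a ∈ range (2 * ℓ ^ (n + 1)) with d ∣ a, (ξ ^ j) ^ a = if k ∣ j then (k : R) else 0 := by
    rw [hdk] at hξ ⊢
    exact hξ.sum_filter_dvd_pow_pow hd j
  have hall := hsum 1 _ one_pos (one_mul _).symm
  rw [filter_true_of_mem fun a _ ↦ one_dvd a] at hall
  simp only [hℓ.coprime_two_mul_pow_iff, sum_filter_not_and_not, two_dvd_and_dvd_iff hodd]
  rw [hall, hsum 2 _ two_pos rfl, hsum ℓ (2 * ℓ ^ n) hℓ.pos (by ring),
    hsum (2 * ℓ) (ℓ ^ n) (by linarith [hℓ.pos]) (by ring), ramanujanSumTwoPrimePow]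
  push_cast
  ring

theorem FiniteField.trace_pow_eq_ramanujanSumTwoPrimePow {p ℓ n : ℕ} [Fact p.Prime]
    (hℓ : ℓ.Prime) (hodd : ¬2 ∣ ℓ)
    (hprim : orderOf (p : ZMod (2 * ℓ ^ (n + 1))) = φ (2 * ℓ ^ (n + 1)))
    {F : Type*} [Field F] [Fintype F] [Algebra (ZMod p) F]
    (hF : Fintype.card F = p ^ φ (2 * ℓ ^ (n + 1))) {ξ : F}
    (hξ : IsPrimitiveRoot ξ (2 * ℓ ^ (n + 1))) (j : ℕ) :
    Algebra.trace (ZMod p) F (ξ ^ j) = ramanujanSumTwoPrimePow ℓ n j := by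
  have hξj : (ξ ^ j) ^ (2 * ℓ ^ (n + 1)) = 1 := by
    rw [← pow_mul, mul_comm, pow_mul, hξ.pow_eq_one, one_pow]
  apply (algebraMap (ZMod p) F).injective
  rw [map_intCast, algebraMap_trace_eq_sum_pow_of_card_eq hF,
    sum_range_totient_pow_eq_sum_coprime (Nat.mul_pos two_pos (pow_pos hℓ.pos _)) hprim
      ((ξ ^ j) ^ ·) fun a ↦ (pow_eq_pow_mod a hξj).symm,
    hξ.sum_coprime_pow_pow hℓ hodd]

namespace ramanujanSumTwoPrimePow

variable {ℓ n : ℕ}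

theorem zero (hℓ : 0 < ℓ) : ramanujanSumTwoPrimePow ℓ n 0 = ((ℓ - 1) * ℓ ^ n : ℕ) := by
  simp only [ramanujanSumTwoPrimePow, dvd_zero, if_true]
  push_cast [Nat.cast_sub hℓ]
  ring

theorem pow_succ_self (hℓ : ¬2 ∣ ℓ) :
    ramanujanSumTwoPrimePow ℓ n (ℓ ^ (n + 1)) = -((ℓ - 1) * ℓ ^ n : ℕ) := by
  have hℓ0 : 0 < ℓ := by omega
  have h1 : ¬2 * ℓ ^ (n + 1) ∣ ℓ ^ (n + 1) := fun h ↦ by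
    have := Nat.le_of_dvd (pow_pos hℓ0 _) h
    have := pow_pos hℓ0 (n + 1)
    omega
  have h2 : ¬2 * ℓ ^ n ∣ ℓ ^ (n + 1) := by
    rwa [pow_succ, Nat.mul_comm _ ℓ, Nat.mul_dvd_mul_iff_right (pow_pos hℓ0 n)]
  simp only [ramanujanSumTwoPrimePow, h1, h2, if_false, dvd_refl, if_true,
    pow_dvd_pow ℓ n.le_succ]
  push_cast [Nat.cast_sub hℓ0]
  ring

theorem mul_pow_of_not_dvd (hℓ : 0 < ℓ) {t : ℕ} (ht : ¬ℓ ∣ t) :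
    ramanujanSumTwoPrimePow ℓ n (t * ℓ ^ n) =
      if 2 ∣ t then -((ℓ ^ n : ℕ) : ℤ) else ((ℓ ^ n : ℕ) : ℤ) := by
  have hpow : 0 < ℓ ^ n := pow_pos hℓ n
  have h1 : ¬ℓ ^ (n + 1) ∣ t * ℓ ^ n := by
    rwa [pow_succ', Nat.mul_dvd_mul_iff_right hpow]
  have h2 : ¬2 * ℓ ^ (n + 1) ∣ t * ℓ ^ n := fun h ↦ h1 ((dvd_mul_left _ 2).trans h)
  have h3 : 2 * ℓ ^ n ∣ t * ℓ ^ n ↔ 2 ∣ t := Nat.mul_dvd_mul_iff_right hpow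
  simp only [ramanujanSumTwoPrimePow, h1, h2, h3, if_false, dvd_mul_left, if_true]
  split_ifs <;> push_cast <;> ring

theorem eq_zero_of_not_dvd {j : ℕ} (h : ¬ℓ ^ n ∣ j) : ramanujanSumTwoPrimePow ℓ n j = 0 := by
  have h1 : ¬ℓ ^ (n + 1) ∣ j := fun h' ↦ h ((pow_dvd_pow ℓ n.le_succ).trans h')
  have h2 : ¬2 * ℓ ^ (n + 1) ∣ j := fun h' ↦ h1 ((dvd_mul_left _ 2).trans h')
  have h3 : ¬2 * ℓ ^ n ∣ j := fun h' ↦ h ((dvd_mul_left _ 2).trans h')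
  simp [ramanujanSumTwoPrimePow, h, h1, h2, h3]

end ramanujanSumTwoPrimePow

section
variable {ℓ n j : ℕ}

theorem exists_eq_mul_pow_of_le (hj₀ : 1 ≤ j) (hj : j ≤ (ℓ - 1) * ℓ ^ n) (hdvd : ℓ ^ n ∣ j) :
    ∃ t, 0 < t ∧ t < ℓ ∧ j = t * ℓ ^ n := by
  obtain ⟨t, rfl⟩ := hdvd
  have hpos : 0 < ℓ ^ n := Nat.pos_of_mul_pos_right hj₀
  have ht : t ≤ ℓ - 1 := Nat.le_of_mul_le_mul_left (by rwa [mul_comm (ℓ - 1)] at hj) hpos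
  have ht₀ : 0 < t := Nat.pos_of_mul_pos_left hj₀
  exact ⟨t, ht₀, by omega, mul_comm _ _⟩

theorem not_dvd_self_add {k : ℕ} (hk₀ : 1 ≤ k) (hk : k ≤ ℓ - 1) : ¬ℓ ∣ ℓ + k :=
  (Nat.dvd_add_right dvd_rfl).not.mpr (Nat.not_dvd_of_pos_of_lt hk₀ (by omega))

-- `J3` and `J2` stand for the paper's index sets `J₁⁽³⁾ ∪ J₃⁽³⁾` and `J₁⁽²⁾ ∪ J₃⁽²⁾`.
theorem exists_even_cofactor_of_mem_J3 (hℓ : ¬2 ∣ ℓ)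
    (h : (1 ≤ j ∧ j ≤ (ℓ - 1) * ℓ ^ n ∧ 2 * ℓ ^ n ∣ j) ∨
      ∃ k, 1 ≤ k ∧ k ≤ ℓ - 1 ∧ ¬2 ∣ k ∧ j = ℓ ^ (n + 1) + k * ℓ ^ n) :
    ∃ t, ¬ℓ ∣ t ∧ 2 ∣ t ∧ j = t * ℓ ^ n := by
  rcases h with ⟨hj₀, hj, hdvd⟩ | ⟨k, hk₀, hk, hk2, rfl⟩
  · obtain ⟨t, ht₀, ht, rfl⟩ := exists_eq_mul_pow_of_le hj₀ hj ((dvd_mul_left _ 2).trans hdvd)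
    exact ⟨t, Nat.not_dvd_of_pos_of_lt ht₀ ht,
      (Nat.mul_dvd_mul_iff_right (Nat.pos_of_mul_pos_left hj₀)).mp hdvd, rfl⟩
  · exact ⟨ℓ + k, not_dvd_self_add hk₀ hk, by omega, by ring⟩

theorem exists_odd_cofactor_of_mem_J2 (hℓ : ¬2 ∣ ℓ)
    (h : (1 ≤ j ∧ j ≤ (ℓ - 1) * ℓ ^ n ∧ ℓ ^ n ∣ j ∧ ¬2 ∣ j) ∨
      ∃ k, 1 ≤ k ∧ k ≤ ℓ - 1 ∧ 2 ∣ k ∧ j = ℓ ^ (n + 1) + k * ℓ ^ n) :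
    ∃ t, ¬ℓ ∣ t ∧ ¬2 ∣ t ∧ j = t * ℓ ^ n := by
  rcases h with ⟨hj₀, hj, hdvd, hodd⟩ | ⟨k, hk₀, hk, hk2, rfl⟩
  · obtain ⟨t, ht₀, ht, rfl⟩ := exists_eq_mul_pow_of_le hj₀ hj hdvd
    exact ⟨t, Nat.not_dvd_of_pos_of_lt ht₀ ht, fun h2 ↦ hodd (h2.mul_right _), rfl⟩
  · exact ⟨ℓ + k, not_dvd_self_add hk₀ hk, by omega, by ring⟩

theorem mem_J_of_pow_dvd (hℓ : ¬2 ∣ ℓ) (hdvd : ℓ ^ n ∣ j) (hj : j < 2 * ℓ ^ (n + 1)) :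
    j = 0 ∨ j = ℓ ^ (n + 1) ∨
      (1 ≤ j ∧ j ≤ (ℓ - 1) * ℓ ^ n ∧ 2 * ℓ ^ n ∣ j) ∨
      (∃ k, 1 ≤ k ∧ k ≤ ℓ - 1 ∧ ¬2 ∣ k ∧ j = ℓ ^ (n + 1) + k * ℓ ^ n) ∨
      (1 ≤ j ∧ j ≤ (ℓ - 1) * ℓ ^ n ∧ ℓ ^ n ∣ j ∧ ¬2 ∣ j) ∨
      (∃ k, 1 ≤ k ∧ k ≤ ℓ - 1 ∧ 2 ∣ k ∧ j = ℓ ^ (n + 1) + k * ℓ ^ n) := by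
  obtain ⟨t, rfl⟩ := hdvd
  have hpos : 0 < ℓ ^ n := pow_pos (by omega) n
  have ht : t < 2 * ℓ := by
    rw [pow_succ, mul_comm _ ℓ, ← mul_assoc, mul_comm _ (ℓ ^ n)] at hj
    exact Nat.lt_of_mul_lt_mul_left hj
  rcases Nat.lt_trichotomy t ℓ with htℓ | htℓ | htℓ
  · rcases t.eq_zero_or_pos with rfl | ht₀
    · simp
    have hlow : 1 ≤ ℓ ^ n * t := Nat.mul_pos hpos ht₀
    have hhigh : ℓ ^ n * t ≤ (ℓ - 1) * ℓ ^ n := by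
      rw [mul_comm]; exact Nat.mul_le_mul_right _ (by omega)
    by_cases h2 : 2 ∣ t
    · refine Or.inr <| Or.inr <| Or.inl ⟨hlow, hhigh, ?_⟩
      rw [mul_comm 2]
      exact mul_dvd_mul_left _ h2
    · refine Or.inr <| Or.inr <| Or.inr <| Or.inr <| Or.inl ⟨hlow, hhigh, dvd_mul_right _ _, ?_⟩
      rw [Nat.prime_two.dvd_mul, not_or]
      exact ⟨fun h ↦ hℓ (Nat.prime_two.dvd_of_dvd_pow h), h2⟩
  · exact Or.inr <| Or.inl (htℓ ▸ (pow_succ ℓ n).symm)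
  · obtain ⟨k, rfl⟩ : ∃ k, t = ℓ + k := ⟨t - ℓ, by omega⟩
    have hj' : ℓ ^ n * (ℓ + k) = ℓ ^ (n + 1) + k * ℓ ^ n := by ring
    by_cases h2 : 2 ∣ k
    · exact Or.inr <| Or.inr <| Or.inr <| Or.inr <| Or.inr ⟨k, by omega, by omega, h2, hj'⟩
    · exact Or.inr <| Or.inr <| Or.inr <| Or.inl ⟨k, by omega, by omega, h2, hj'⟩
end

theorem stmt_2_general
    (p ℓ m : ℕ) [Fact (Nat.Prime p)]
    (hℓ : Nat.Prime ℓ) (hm : 0 < m)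
    (N : ℕ) (hN : N = 2 * ℓ ^ m)
    (hprim : orderOf (p : ZMod N) = Nat.totient N)
    (e : ℕ) (he : e = Nat.totient N) (he' : e = (ℓ - 1) * ℓ ^ (m - 1))
    (q : ℕ) (hq : q = p ^ e)
    (F : Type) [Field F] [Fintype F] [Algebra (ZMod p) F]
    (hF : Fintype.card F = q)
    (g : Fˣ) (hg : ∀ x : Fˣ, ∃ k : ℕ, x = g ^ k)
    (ξ : F) (hξ : ξ = (g : F) ^ ((q - 1) / N))
    :
    ∀ j : ℕ, j ≤ N - 1 →
      (j = 0 → Algebra.trace (ZMod p) F (ξ ^ j) = (((ℓ - 1) * ℓ ^ (m - 1) : ℕ) : ZMod p)) ∧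
      (j = ℓ ^ m → Algebra.trace (ZMod p) F (ξ ^ j) = -(((ℓ - 1) * ℓ ^ (m - 1) : ℕ) : ZMod p)) ∧
      ((1 ≤ j ∧ j ≤ (ℓ - 1) * ℓ ^ (m - 1) ∧ 2 * ℓ ^ (m - 1) ∣ j) ∨ (∃ k, 1 ≤ k ∧ k ≤ ℓ - 1 ∧ ¬ 2 ∣ k ∧ j = ℓ ^ m + k * ℓ ^ (m - 1)) →
        Algebra.trace (ZMod p) F (ξ ^ j) = -((ℓ ^ (m - 1) : ℕ) : ZMod p)) ∧
      ((1 ≤ j ∧ j ≤ (ℓ - 1) * ℓ ^ (m - 1) ∧ ℓ ^ (m - 1) ∣ j ∧ ¬ 2 ∣ j) ∨ (∃ k, 1 ≤ k ∧ k ≤ ℓ - 1 ∧ 2 ∣ k ∧ j = ℓ ^ m + k * ℓ ^ (m - 1)) →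
        Algebra.trace (ZMod p) F (ξ ^ j) = ((ℓ ^ (m - 1) : ℕ) : ZMod p)) ∧
      (¬(j = 0 ∨ j = ℓ ^ m ∨ (1 ≤ j ∧ j ≤ (ℓ - 1) * ℓ ^ (m - 1) ∧ 2 * ℓ ^ (m - 1) ∣ j) ∨ (∃ k, 1 ≤ k ∧ k ≤ ℓ - 1 ∧ ¬ 2 ∣ k ∧ j = ℓ ^ m + k * ℓ ^ (m - 1)) ∨ (1 ≤ j ∧ j ≤ (ℓ - 1) * ℓ ^ (m - 1) ∧ ℓ ^ (m - 1) ∣ j ∧ ¬ 2 ∣ j) ∨ (∃ k, 1 ≤ k ∧ k ≤ ℓ - 1 ∧ 2 ∣ k ∧ j = ℓ ^ m + k * ℓ ^ (m - 1))) →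
        Algebra.trace (ZMod p) F (ξ ^ j) = 0) := by
  obtain ⟨n, rfl⟩ : ∃ n, m = n + 1 := ⟨m - 1, by omega⟩
  simp only [Nat.add_sub_cancel] at he' ⊢
  subst hN he hq
  have hodd : ¬2 ∣ ℓ := hℓ.not_two_dvd_of_totient_two_mul_pow he'
  have hξN : IsPrimitiveRoot ξ (2 * ℓ ^ (n + 1)) := by
    rw [hξ, ← hF]
    refine FiniteField.isPrimitiveRoot_pow_div hg ?_
    rw [hF, ← hprim]
    exact Nat.dvd_pow_orderOf_sub_one (Fact.out : p.Prime).pos _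
  intro j hj
  simp only [FiniteField.trace_pow_eq_ramanujanSumTwoPrimePow hℓ hodd hprim hF hξN]
  refine ⟨?_, ?_, ?_, ?_, ?_⟩
  · rintro rfl
    rw [ramanujanSumTwoPrimePow.zero hℓ.pos, Int.cast_natCast]
  · rintro rfl
    rw [ramanujanSumTwoPrimePow.pow_succ_self hodd, Int.cast_neg, Int.cast_natCast]
  · intro h
    obtain ⟨t, hℓt, h2t, rfl⟩ := exists_even_cofactor_of_mem_J3 hodd h
    rw [ramanujanSumTwoPrimePow.mul_pow_of_not_dvd hℓ.pos hℓt, if_pos h2t, Int.cast_neg,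
      Int.cast_natCast]
  · intro h
    obtain ⟨t, hℓt, h2t, rfl⟩ := exists_odd_cofactor_of_mem_J2 hodd h
    rw [ramanujanSumTwoPrimePow.mul_pow_of_not_dvd hℓ.pos hℓt, if_neg h2t, Int.cast_natCast]
  · intro h
    have hj' : j < 2 * ℓ ^ (n + 1) := by have := pow_pos hℓ.pos (n + 1); omega
    rw [ramanujanSumTwoPrimePow.eq_zero_of_not_dvd fun hd ↦ h (mem_J_of_pow_dvd hodd hd hj'),
      Int.cast_zero]

theorem stmt_2
    (p ℓ m : ℕ) [Fact (Nat.Prime p)] (hp2 : p ≠ 2)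
    (hℓ : Nat.Prime ℓ) (hℓp : ℓ ≠ p) (hm : 0 < m)
    (N : ℕ) (hN : N = 2 * ℓ ^ m)
    (hprim : orderOf (p : ZMod N) = Nat.totient N)
    (e : ℕ) (he : e = Nat.totient N) (he' : e = (ℓ - 1) * ℓ ^ (m - 1))
    (q : ℕ) (hq : q = p ^ e)
    (F : Type) [Field F] [Fintype F] [DecidableEq F] [Algebra (ZMod p) F]
    (hF : Fintype.card F = q)
    (g : Fˣ) (hg : ∀ x : Fˣ, ∃ k : ℕ, x = g ^ k)
    (ξ : F) (hξ : ξ = (g : F) ^ ((q - 1) / N))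
    :
    ∀ j : ℕ, j ≤ N - 1 →
      (j = 0 → Algebra.trace (ZMod p) F (ξ ^ j) = (((ℓ - 1) * ℓ ^ (m - 1) : ℕ) : ZMod p)) ∧
      (j = ℓ ^ m → Algebra.trace (ZMod p) F (ξ ^ j) = -(((ℓ - 1) * ℓ ^ (m - 1) : ℕ) : ZMod p)) ∧
      ((1 ≤ j ∧ j ≤ (ℓ - 1) * ℓ ^ (m - 1) ∧ 2 * ℓ ^ (m - 1) ∣ j) ∨ (∃ k, 1 ≤ k ∧ k ≤ ℓ - 1 ∧ ¬ 2 ∣ k ∧ j = ℓ ^ m + k * ℓ ^ (m - 1)) →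
        Algebra.trace (ZMod p) F (ξ ^ j) = -((ℓ ^ (m - 1) : ℕ) : ZMod p)) ∧
      ((1 ≤ j ∧ j ≤ (ℓ - 1) * ℓ ^ (m - 1) ∧ ℓ ^ (m - 1) ∣ j ∧ ¬ 2 ∣ j) ∨ (∃ k, 1 ≤ k ∧ k ≤ ℓ - 1 ∧ 2 ∣ k ∧ j = ℓ ^ m + k * ℓ ^ (m - 1)) →
        Algebra.trace (ZMod p) F (ξ ^ j) = ((ℓ ^ (m - 1) : ℕ) : ZMod p)) ∧
      (¬(j = 0 ∨ j = ℓ ^ m ∨ (1 ≤ j ∧ j ≤ (ℓ - 1) * ℓ ^ (m - 1) ∧ 2 * ℓ ^ (m - 1) ∣ j) ∨ (∃ k, 1 ≤ k ∧ k ≤ ℓ - 1 ∧ ¬ 2 ∣ k ∧ j = ℓ ^ m + k * ℓ ^ (m - 1)) ∨ (1 ≤ j ∧ j ≤ (ℓ - 1) * ℓ ^ (m - 1) ∧ ℓ ^ (m - 1) ∣ j ∧ ¬ 2 ∣ j) ∨ (∃ k, 1 ≤ k ∧ k ≤ ℓ - 1 ∧ 2 ∣ k ∧ j = ℓ ^ m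 + k * ℓ ^ (m - 1))) →
        Algebra.trace (ZMod p) F (ξ ^ j) = 0) :=
  stmt_2_general p ℓ m hℓ hm N hN hprim e he he' q hq F hF g hg ξ hξ
end

section
/- For every a ∈ F_p (embedded in F_q), S(a) = ζ_p^{ℓ^{m−1}(ℓ−1)a} + ζ_p^{−ℓ^{m−1}(ℓ−1)a} + (ℓ−1)·(ζ_p^{ℓ^{m−1}a} + ζ_p^{−ℓ^{m−1}a}) + 2ℓ^m − 2ℓ, where exponents like ℓ^{m−1}(ℓ−1)a are computed in F_p and ζ_p is raised to an integer representative. -/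
/-!
Since `p` generates `(ℤ/Nℤ)ˣ`, the Frobenius orbit of an `N`-th root of unity `η` is
`{η ^ t : t prime to N}`, so `Tr η = Σ_{(t, N) = 1} η ^ t`, and inclusion–exclusion over the primes
`2` and `ℓ` turns `Tr (ξ ^ i)` into the Ramanujan sum `c_N(i)`. Writing `i = ℓ^(m-1) j + r` with
`r < ℓ^(m-1)`, `c_N(i)` vanishes unless `r = 0`, and `c_N(ℓ^(m-1) j) = ℓ^(m-1) c_{2ℓ}(j)`, where
`c_{2ℓ}(j)` is `ℓ - 1` at `j = 0`, `-(ℓ - 1)` at `j = ℓ`, `-1` at the other even `j < 2ℓ` and `1`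
at the other odd ones. Counting these values gives the formula.
-/

open Finset
open scoped Nat

theorem Finset.sum_range_mul_eq_sum_sum {M : Type*} [AddCommMonoid M] (f : ℕ → M) (a b : ℕ) :
    ∑ i ∈ range (a * b), f i = ∑ j ∈ range b, ∑ r ∈ range a, f (a * j + r) := by
  induction b with
  | zero => simp
  | succ b ih => rw [Nat.mul_succ, sum_range_add, ih, sum_range_succ]

theorem Finset.sum_ite_eq_add_nsmul {ι M : Type*} [DecidableEq ι] [AddCommMonoid M]
    {s : Finset ι} {i₀ : ι} (h : i₀ ∈ s) (x y : M) :
    ∑ i ∈ s, (if i = i₀ then x else y) = x + (#s - 1) • y := by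
  rw [← add_sum_erase s _ h, if_pos rfl,
    sum_congr rfl fun i hi => if_neg (ne_of_mem_erase hi), sum_const, card_erase_of_mem h]

section RootsOfUnity

variable {K : Type*} [Field K] [DecidableEq K]

theorem geom_sum_eq_ite_of_pow_eq_one {η : K} {n : ℕ} (hη : η ^ n = 1) :
    ∑ i ∈ range n, η ^ i = if η = 1 then (n : K) else 0 := by
  split_ifs with h
  · simp [h]
  · rw [geom_sum_eq h, hη, sub_self, zero_div]

theorem sum_range_filter_dvd_pow {η : K} {n d : ℕ} (hd : d ∣ n) (hη : η ^ n = 1) :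
    ∑ t ∈ range n with d ∣ t, η ^ t = if η ^ d = 1 then ((n / d : ℕ) : K) else 0 := by
  obtain ⟨c, rfl⟩ := hd
  rcases Nat.eq_zero_or_pos d with rfl | hd0
  · simp
  have hfilter :
      {t ∈ range (d * c) | d ∣ t} = (range c).map ⟨(d * ·), mul_right_injective₀ hd0.ne'⟩ := by
    ext t
    simp only [mem_filter, mem_range, mem_map, Function.Embedding.coeFn_mk]
    constructor
    · rintro ⟨ht, j, rfl⟩
      exact ⟨j, Nat.lt_of_mul_lt_mul_left ht, rfl⟩
    · rintro ⟨j, hj, rfl⟩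
      exact ⟨Nat.mul_lt_mul_of_pos_left hj hd0, dvd_mul_right d j⟩
  rw [hfilter, sum_map, Nat.mul_div_cancel_left _ hd0]
  simp_rw [Function.Embedding.coeFn_mk, pow_mul]
  exact geom_sum_eq_ite_of_pow_eq_one (by rw [← pow_mul, hη])

theorem sum_coprime_pow_eq_of_primeFactors_eq_pair {n r s : ℕ} (hrs : r ≠ s)
    (hn : n.primeFactors = {r, s}) {η : K} (hη : η ^ n = 1) :
    ∑ t ∈ range n with n.Coprime t, η ^ t =
      (if η = 1 then (n : K) else 0) - (if η ^ r = 1 then ((n / r : ℕ) : K) else 0)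
        - (if η ^ s = 1 then ((n / s : ℕ) : K) else 0)
        + (if η ^ (r * s) = 1 then ((n / (r * s) : ℕ) : K) else 0) := by
  obtain ⟨hr, hrn, hn0⟩ := Nat.mem_primeFactors.1 (hn ▸ mem_insert_self r {s})
  obtain ⟨hs, hsn, -⟩ := Nat.mem_primeFactors.1 (hn ▸ mem_insert_of_mem (mem_singleton_self s))
  have hrs' : r.Coprime s := (Nat.coprime_primes hr hs).2 hrs
  have hcop (t : ℕ) : n.Coprime t ↔ ¬ r ∣ t ∧ ¬ s ∣ t := by
    refine ⟨fun h => ⟨fun hrt => hr.one_lt.ne' ((h.coprime_dvd_left hrn).eq_one_of_dvd hrt),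
      fun hst => hs.one_lt.ne' ((h.coprime_dvd_left hsn).eq_one_of_dvd hst)⟩, fun h => ?_⟩
    refine Nat.coprime_of_dvd fun k hk hkn => ?_
    have : k = r ∨ k = s := by
      simpa [hn] using Nat.mem_primeFactors.2 ⟨hk, hkn, hn0⟩
    rcases this with rfl | rfl
    exacts [h.1, h.2]
  have hrs_dvd (t : ℕ) : r * s ∣ t ↔ r ∣ t ∧ s ∣ t :=
    ⟨fun h => ⟨dvd_of_mul_right_dvd h, dvd_of_mul_left_dvd h⟩,
      fun h => hrs'.mul_dvd_of_dvd_of_dvd h.1 h.2⟩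
  have hpoint (t : ℕ) : (if n.Coprime t then η ^ t else 0) = η ^ t
      - (if r ∣ t then η ^ t else 0) - (if s ∣ t then η ^ t else 0)
      + (if r * s ∣ t then η ^ t else 0) := by
    by_cases hrt : r ∣ t <;> by_cases hst : s ∣ t <;> simp [hcop, hrs_dvd, hrt, hst]
  rw [sum_filter, sum_congr rfl fun t _ => hpoint t, sum_add_distrib, sum_sub_distrib,
    sum_sub_distrib, ← sum_filter, ← sum_filter, ← sum_filter,
    geom_sum_eq_ite_of_pow_eq_one hη, sum_range_filter_dvd_pow hrn hη,
    sum_range_filter_dvd_pow hsn hη,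
    sum_range_filter_dvd_pow (hrs'.mul_dvd_of_dvd_of_dvd hrn hsn) hη]

end RootsOfUnity

/-- If `p` generates `(ℤ/nℤ)ˣ`, then `j ↦ p ^ j % n` enumerates the residues prime to `n`. -/
theorem sum_pow_pow_eq_sum_coprime_pow {R : Type*} [Semiring R] {p n : ℕ}
    (hp : orderOf (p : ZMod n) = φ n) {η : R} (hη : η ^ n = 1) :
    ∑ j ∈ range (φ n), η ^ p ^ j = ∑ t ∈ range n with n.Coprime t, η ^ t := by
  rcases Nat.eq_zero_or_pos n with rfl | hn
  · simp
  have hcop : n.Coprime p := ((ZMod.isUnit_iff_coprime p n).1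
    (orderOf_pos_iff.1 (hp ▸ Nat.totient_pos.2 hn)).isUnit).symm
  have hinj : Set.InjOn (fun j => p ^ j % n) (range (φ n)) := by
    intro i hi j hj hij
    have : (p : ZMod n) ^ i = (p : ZMod n) ^ j := by
      simpa only [ZMod.natCast_mod, Nat.cast_pow] using congrArg (fun t : ℕ => (t : ZMod n)) hij
    exact pow_injOn_Iio_orderOf (by simpa [hp] using hi) (by simpa [hp] using hj) this
  have himage : (range (φ n)).image (fun j => p ^ j % n) = {t ∈ range n | n.Coprime t} := by
    refine eq_of_subset_of_card_le (fun t ht => ?_) ?_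
    · obtain ⟨j, -, rfl⟩ := mem_image.1 ht
      refine mem_filter.2 ⟨mem_range.2 (Nat.mod_lt _ hn), ?_⟩
      rw [Nat.Coprime, Nat.gcd_comm, ← Nat.gcd_rec]
      exact Nat.Coprime.pow_right j hcop
    · rw [card_image_of_injOn hinj, card_range, Nat.totient]
  rw [← himage, sum_image hinj]
  exact sum_congr rfl fun j _ => pow_eq_pow_mod _ hη

theorem FiniteField.algebraMap_trace_eq_sum_coprime_pow (K L : Type*) [Field K] [Field L]
    [Finite L] [Algebra K L] {n : ℕ} (hprim : orderOf (Nat.card K : ZMod n) = φ n)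
    (hdeg : Module.finrank K L = φ n) {η : L} (hη : η ^ n = 1) :
    algebraMap K L (Algebra.trace K L η) = ∑ t ∈ range n with n.Coprime t, η ^ t := by
  rw [FiniteField.algebraMap_trace_eq_sum_pow, hdeg, sum_pow_pow_eq_sum_coprime_pow hprim hη]

theorem IsPrimitiveRoot.pow_pow_eq_one_iff_dvd {M : Type*} [CommMonoid M] {ξ : M} {d e : ℕ}
    (h : IsPrimitiveRoot ξ (e * d)) (hd : 0 < d) (i : ℕ) : (ξ ^ i) ^ d = 1 ↔ e ∣ i := by
  rw [← pow_mul, h.pow_eq_one_iff_dvd, Nat.mul_dvd_mul_iff_right hd]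

theorem ite_dvd_mul_add {R : Type*} [Semiring R] {a r : ℕ} (hr : r < a) (x j : ℕ) :
    (if a * x ∣ a * j + r then ((a * x : ℕ) : R) else 0) =
      if r = 0 then (a : R) * (if x ∣ j then (x : R) else 0) else 0 := by
  rcases eq_or_ne r 0 with rfl | hr0
  · simp only [add_zero, Nat.mul_dvd_mul_iff_left (by omega : 0 < a)]
    split_ifs <;> simp
  · have hndvd : ¬ a * x ∣ a * j + r := fun h => hr0 <| Nat.eq_zero_of_dvd_of_lt
      ((Nat.dvd_add_right (dvd_mul_right a j)).1 (dvd_of_mul_right_dvd h)) hr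
    simp [hndvd, hr0]

section RamanujanSum

variable {R M : Type*} [CommRing R] [AddCommMonoid M] {ℓ : ℕ}

variable (R) in
/-- `Σ_{d ∣ 2ℓ} μ(d) [2ℓa/d ∣ i] (2ℓa/d)`; for an odd prime `ℓ` and `a = ℓ ^ k` this is the
Ramanujan sum `c_{2ℓ^(k+1)}(i)`. -/
def ramanujanSumTwoMul (a ℓ i : ℕ) : R :=
  (if a * (2 * ℓ) ∣ i then ((a * (2 * ℓ) : ℕ) : R) else 0)
    - (if a * ℓ ∣ i then ((a * ℓ : ℕ) : R) else 0)
    - (if a * 2 ∣ i then ((a * 2 : ℕ) : R) else 0) + (if a ∣ i then (a : R) else 0)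

theorem ramanujanSumTwoMul_mul_add {a r : ℕ} (hr : r < a) (j : ℕ) :
    ramanujanSumTwoMul R a ℓ (a * j + r) =
      if r = 0 then (a : R) * ramanujanSumTwoMul R 1 ℓ j else 0 := by
  have hone := ite_dvd_mul_add (R := R) hr 1 j
  rw [mul_one] at hone
  rw [ramanujanSumTwoMul, ramanujanSumTwoMul, ite_dvd_mul_add hr, ite_dvd_mul_add hr,
    ite_dvd_mul_add hr, hone]
  simp only [one_mul, one_dvd, if_true]
  split_ifs <;> push_cast <;> ring

theorem ramanujanSumTwoMul_one_two_mul (hℓ : ℓ.Prime) (hℓ2 : ℓ ≠ 2) {k : ℕ} (hk : k < ℓ) :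
    ramanujanSumTwoMul R 1 ℓ (2 * k) = if k = 0 then (ℓ : R) - 1 else -1 := by
  have hk0 : ℓ ∣ k ↔ k = 0 := ⟨fun h => Nat.eq_zero_of_dvd_of_lt h hk, by rintro rfl; simp⟩
  have h2k : ℓ ∣ 2 * k ↔ k = 0 :=
    ((Nat.coprime_primes hℓ Nat.prime_two).2 hℓ2).dvd_mul_left.trans hk0
  simp only [ramanujanSumTwoMul, one_mul, Nat.mul_dvd_mul_iff_left two_pos, hk0, h2k,
    dvd_mul_right, one_dvd, if_true]
  split_ifs <;> push_cast <;> ring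

theorem ramanujanSumTwoMul_one_two_mul_add_one (hℓ : ℓ.Prime) (hℓ2 : ℓ ≠ 2) {k : ℕ}
    (hk : k < ℓ) :
    ramanujanSumTwoMul R 1 ℓ (2 * k + 1) = if k = ℓ / 2 then -((ℓ : R) - 1) else 1 := by
  have hodd : ℓ % 2 = 1 := Nat.odd_iff.1 (hℓ.odd_of_ne_two hℓ2)
  have hℓk : ℓ ∣ 2 * k + 1 ↔ k = ℓ / 2 :=
    ⟨fun h => by have := Nat.eq_of_dvd_of_lt_two_mul (by omega) h (by omega); omega,
      fun h => ⟨1, by omega⟩⟩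
  have h2k : ¬ 2 ∣ 2 * k + 1 := by omega
  have h2ℓk : ¬ 2 * ℓ ∣ 2 * k + 1 := fun h => h2k (dvd_of_mul_right_dvd h)
  simp only [ramanujanSumTwoMul, one_mul, hℓk, h2k, h2ℓk, one_dvd, if_false, if_true]
  split_ifs <;> push_cast <;> ring

theorem sum_range_ramanujanSumTwoMul_one (hℓ : ℓ.Prime) (hℓ2 : ℓ ≠ 2) (w : R → M) :
    ∑ j ∈ range (2 * ℓ), w (ramanujanSumTwoMul R 1 ℓ j) =
      w (ℓ - 1) + w (-(ℓ - 1)) + (ℓ - 1) • (w 1 + w (-1)) := by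
  have hmid : ℓ / 2 ∈ range ℓ := mem_range.2 (Nat.div_lt_self hℓ.pos one_lt_two)
  rw [sum_range_mul_eq_sum_sum]
  simp only [sum_range_succ, sum_range_zero, zero_add, add_zero]
  rw [sum_add_distrib, sum_congr rfl fun k hk =>
      congrArg w (ramanujanSumTwoMul_one_two_mul hℓ hℓ2 (mem_range.1 hk)),
    sum_congr rfl fun k hk =>
      congrArg w (ramanujanSumTwoMul_one_two_mul_add_one hℓ hℓ2 (mem_range.1 hk))]
  simp only [apply_ite w]
  rw [sum_ite_eq_add_nsmul (mem_range.2 hℓ.pos), sum_ite_eq_add_nsmul hmid, card_range, nsmul_add]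
  abel

theorem sum_range_ramanujanSumTwoMul (hℓ : ℓ.Prime) (hℓ2 : ℓ ≠ 2) {a : ℕ} (ha : 0 < a)
    (w : R → M) :
    ∑ i ∈ range (a * (2 * ℓ)), w (ramanujanSumTwoMul R a ℓ i) =
      w (a * (ℓ - 1)) + w (-(a * (ℓ - 1))) + (ℓ - 1) • (w a + w (-a))
        + (a * (2 * ℓ) - 2 * ℓ) • w 0 := by
  have hinner (j : ℕ) : ∑ r ∈ range a, w (ramanujanSumTwoMul R a ℓ (a * j + r)) =
      w (a * ramanujanSumTwoMul R 1 ℓ j) + (a - 1) • w 0 := by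
    rw [sum_congr rfl fun r hr => congrArg w (ramanujanSumTwoMul_mul_add (mem_range.1 hr) j)]
    simp only [apply_ite w]
    rw [sum_ite_eq_add_nsmul (mem_range.2 ha), card_range]
  rw [sum_range_mul_eq_sum_sum, sum_congr rfl fun j _ => hinner j, sum_add_distrib,
    sum_range_ramanujanSumTwoMul_one hℓ hℓ2 (fun x => w (a * x)), sum_const, card_range,
    smul_smul, mul_neg, mul_neg, mul_one, Nat.mul_sub_one, mul_comm (2 * ℓ)]

end RamanujanSum

theorem FiniteField.trace_pow_eq_ramanujanSumTwoMul (K L : Type*) [Field K] [Field L]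
    [Finite L] [Algebra K L] {ℓ k : ℕ} (hℓ : ℓ.Prime) (hℓ2 : ℓ ≠ 2)
    (hprim : orderOf (Nat.card K : ZMod (ℓ ^ k * (2 * ℓ))) = φ (ℓ ^ k * (2 * ℓ)))
    (hdeg : Module.finrank K L = φ (ℓ ^ k * (2 * ℓ))) {ξ : L}
    (hξ : IsPrimitiveRoot ξ (ℓ ^ k * (2 * ℓ))) (i : ℕ) :
    Algebra.trace K L (ξ ^ i) = ramanujanSumTwoMul K (ℓ ^ k) ℓ i := by
  classical
  set N := ℓ ^ k * (2 * ℓ) with hN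
  have h2ℓ : 0 < 2 * ℓ := Nat.mul_pos two_pos hℓ.pos
  have hfactors : N.primeFactors = {2, ℓ} := by
    rw [(by ring : N = 2 * ℓ ^ (k + 1)),
      Nat.primeFactors_mul two_ne_zero (pow_ne_zero _ hℓ.ne_zero),
      Nat.primeFactors_prime_pow k.succ_ne_zero hℓ, Nat.prime_two.primeFactors]
    rfl
  have hroot (d e : ℕ) (h : N = e * d) (hd : 0 < d) : (ξ ^ i) ^ d = 1 ↔ e ∣ i :=
    (h ▸ hξ).pow_pow_eq_one_iff_dvd hd i
  have hpow : (ξ ^ i) ^ N = 1 := by rw [← pow_mul, mul_comm, pow_mul, hξ.pow_eq_one, one_pow]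
  apply (algebraMap K L).injective
  rw [FiniteField.algebraMap_trace_eq_sum_coprime_pow K L hprim hdeg hpow,
    sum_coprime_pow_eq_of_primeFactors_eq_pair hℓ2.symm hfactors hpow,
    Nat.div_eq_of_eq_mul_left two_pos (by ring : N = ℓ ^ k * ℓ * 2),
    Nat.div_eq_of_eq_mul_left hℓ.pos (by ring : N = ℓ ^ k * 2 * ℓ),
    Nat.div_eq_of_eq_mul_left h2ℓ hN]
  simp only [ramanujanSumTwoMul, hξ.pow_eq_one_iff_dvd, hroot 2 (ℓ ^ k * ℓ) (by ring) two_pos,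
    hroot ℓ (ℓ ^ k * 2) (by ring) hℓ.pos, hroot (2 * ℓ) (ℓ ^ k) rfl h2ℓ, map_add, map_sub,
    apply_ite (algebraMap K L), map_natCast, map_zero, ← hN]

theorem stmt_3_general
    (p ℓ m : ℕ) [Fact (Nat.Prime p)]
    (hℓ : Nat.Prime ℓ) (hm : 0 < m)
    (N : ℕ) (hN : N = 2 * ℓ ^ m)
    (hprim : orderOf (p : ZMod N) = Nat.totient N)
    (e : ℕ) (he : e = Nat.totient N) (he' : e = (ℓ - 1) * ℓ ^ (m - 1))
    (q : ℕ) (hq : q = p ^ e)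
    (F : Type) [Field F] [Fintype F] [Algebra (ZMod p) F]
    (hF : Fintype.card F = q)
    (ζ : ℂ)
    (χ : F → ℂ) (hχ : ∀ c : F, χ c = ζ ^ (Algebra.trace (ZMod p) F c).val)
    (g : Fˣ) (hg : ∀ x : Fˣ, ∃ k : ℕ, x = g ^ k)
    (ξ : F) (hξ : ξ = (g : F) ^ ((q - 1) / N))
    (S1 : F → ℂ) (hS1 : ∀ a : F, S1 a = ∑ i ∈ Finset.range N, χ (a * ξ ^ i))
    :
    ∀ a : ZMod p,
      S1 (algebraMap (ZMod p) F a) =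
        ζ ^ (((ℓ : ZMod p) ^ (m - 1) * ((ℓ : ZMod p) - 1) * a).val) +
        ζ ^ ((-((ℓ : ZMod p) ^ (m - 1) * ((ℓ : ZMod p) - 1)) * a).val) +
        ((ℓ : ℂ) - 1) * (ζ ^ (((ℓ : ZMod p) ^ (m - 1) * a).val) +
          ζ ^ ((-(ℓ : ZMod p) ^ (m - 1) * a).val)) +
        2 * (ℓ : ℂ) ^ m - 2 * (ℓ : ℂ) := by
  intro a
  obtain ⟨k, rfl⟩ : ∃ k, m = k + 1 := ⟨m - 1, by omega⟩
  rw [Nat.add_sub_cancel] at he' ⊢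
  have hℓ2 : ℓ ≠ 2 := by
    rintro rfl
    rw [he, hN, ← pow_succ', Nat.totient_prime_pow Nat.prime_two (by omega)] at he'
    simp at he'
  have hdeg : Module.finrank (ZMod p) F = φ N := he ▸ Nat.pow_right_injective
    (Fact.out : p.Prime).two_le ((FiniteField.pow_finrank_eq_card p F).trans (hF.trans hq))
  have hNq : N ∣ q - 1 := by
    rw [← ZMod.natCast_eq_zero_iff, hq, Nat.cast_sub (Nat.one_le_pow _ _ (Fact.out : p.Prime).pos),
      Nat.cast_pow, he, ← hprim, pow_orderOf_eq_one, Nat.cast_one, sub_self]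
  have hξN : IsPrimitiveRoot ξ N := hξ ▸ hF ▸ FiniteField.isPrimitiveRoot_pow_div hg (hF ▸ hNq)
  have hNa : N = ℓ ^ k * (2 * ℓ) := by rw [hN]; ring
  rw [hNa] at hprim hdeg hξN
  have htrace := FiniteField.trace_pow_eq_ramanujanSumTwoMul (ZMod p) F hℓ hℓ2
    (by rwa [Nat.card_zmod]) hdeg hξN
  let w : ZMod p → ℂ := fun x => ζ ^ (x * a).val
  calc S1 (algebraMap (ZMod p) F a)
      = ∑ i ∈ range (ℓ ^ k * (2 * ℓ)), w (ramanujanSumTwoMul (ZMod p) (ℓ ^ k) ℓ i) := by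
        rw [hS1, hNa]
        refine sum_congr rfl fun i _ => ?_
        rw [hχ, ← Algebra.smul_def, map_smul, htrace, smul_eq_mul, mul_comm]
    _ = _ := by
        rw [sum_range_ramanujanSumTwoMul hℓ hℓ2 (pow_pos hℓ.pos k) w]
        simp only [w, zero_mul, ZMod.val_zero, pow_zero, nsmul_eq_mul, mul_one]
        rw [Nat.cast_sub hℓ.one_le, Nat.cast_sub (Nat.le_mul_of_pos_left _ (pow_pos hℓ.pos k))]
        push_cast
        ring

theorem stmt_3
    (p ℓ m : ℕ) [Fact (Nat.Prime p)] (hp2 : p ≠ 2)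
    (hℓ : Nat.Prime ℓ) (hℓp : ℓ ≠ p) (hm : 0 < m)
    (N : ℕ) (hN : N = 2 * ℓ ^ m)
    (hprim : orderOf (p : ZMod N) = Nat.totient N)
    (e : ℕ) (he : e = Nat.totient N) (he' : e = (ℓ - 1) * ℓ ^ (m - 1))
    (q : ℕ) (hq : q = p ^ e)
    (F : Type) [Field F] [Fintype F] [DecidableEq F] [Algebra (ZMod p) F]
    (hF : Fintype.card F = q)
    (ζ : ℂ) (hζ : ζ = Complex.exp (2 * (Real.pi : ℂ) * Complex.I / (p : ℂ)))
    (χ : F → ℂ) (hχ : ∀ c : F, χ c = ζ ^ (Algebra.trace (ZMod p) F c).val)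
    (g : Fˣ) (hg : ∀ x : Fˣ, ∃ k : ℕ, x = g ^ k)
    (ξ : F) (hξ : ξ = (g : F) ^ ((q - 1) / N))
    (S1 : F → ℂ) (hS1 : ∀ a : F, S1 a = ∑ i ∈ Finset.range N, χ (a * ξ ^ i))
    :
    ∀ a : ZMod p,
      S1 (algebraMap (ZMod p) F a) =
        ζ ^ (((ℓ : ZMod p) ^ (m - 1) * ((ℓ : ZMod p) - 1) * a).val) +
        ζ ^ ((-((ℓ : ZMod p) ^ (m - 1) * ((ℓ : ZMod p) - 1)) * a).val) +
        ((ℓ : ℂ) - 1) * (ζ ^ (((ℓ : ZMod p) ^ (m - 1) * a).val) +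
          ζ ^ ((-(ℓ : ZMod p) ^ (m - 1) * a).val)) +
        2 * (ℓ : ℂ) ^ m - 2 * (ℓ : ℂ) :=
  stmt_3_general p ℓ m hℓ hm N hN hprim e he he' q hq F hF ζ χ hχ g hg ξ hξ S1 hS1
end

section
/- For every a ∈ F_q, every b ∈ F_q^*, and every x ∈ F_p^* (embedded in F_q^*), one has S(a,b) = S(a, x·b). -/
/-!
Multiplying `b` by `u ∈ 𝔽ₚˣ` amounts to the substitution `x ↦ u x`, which leaves `x ^ ((q - 1) / N)`
unchanged as soon as `p - 1 ∣ (q - 1) / N`, i.e. `N ∣ 1 + p + ⋯ + p ^ (e - 1)`. Since `p` generates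
`(ℤ/N)ˣ`, this geometric sum is the sum of all units of `ℤ/N`, which vanishes because `v ↦ -v` pairs
them off without fixed points when `N > 2`.
-/

open Finset

theorem sum_units_eq_zero {R : Type*} [CommRing R] [Fintype Rˣ] (h2 : (2 : R) ≠ 0) :
    ∑ u : Rˣ, (u : R) = 0 := by
  refine sum_involution (fun u _ => -u) (fun u _ => by simp) (fun u _ _ hu => h2 ?_)
    (fun _ _ => mem_univ _) (fun u _ => neg_neg u)
  have hu2 : (u : R) * 2 = 0 := by
    have := congrArg Units.val hu
    push_cast at this
    linear_combination -this
  exact u.mul_right_eq_zero.mp hu2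

theorem sum_range_pow_eq_sum_of_orderOf_eq_card {G M : Type*} [Group G] [Fintype G]
    [AddCommMonoid M] {g : G} (hg : orderOf g = Fintype.card G) (f : G → M) :
    ∑ i ∈ range (Fintype.card G), f (g ^ i) = ∑ x, f x := by
  rw [← Fin.sum_univ_eq_sum_range (fun i => f (g ^ i))]
  refine Fintype.sum_bijective (fun i : Fin _ => g ^ (i : ℕ)) ?_ _ _ fun _ => rfl
  rw [Fintype.bijective_iff_injective_and_card, Fintype.card_fin]
  refine ⟨fun i j hij => Fin.ext (pow_injOn_Iio_orderOf ?_ ?_ hij), rfl⟩ <;> simp [hg]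

theorem ZMod.geom_sum_eq_zero_of_orderOf_eq_totient {n : ℕ} (hn : 2 < n) {a : ZMod n}
    (ha : orderOf a = n.totient) : ∑ i ∈ range n.totient, a ^ i = 0 := by
  have : NeZero n := ⟨by omega⟩
  have hunit : IsUnit a :=
    (orderOf_pos_iff.mp (ha ▸ Nat.totient_pos.mpr (by omega))).isUnit
  have hgen : orderOf hunit.unit = Fintype.card (ZMod n)ˣ := by
    rw [← orderOf_units, hunit.unit_spec, ha, ZMod.card_units_eq_totient]
  have h2 : (2 : ZMod n) ≠ 0 := by
    rw [← Nat.cast_ofNat, Ne, ZMod.natCast_eq_zero_iff]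
    exact fun h => by have := Nat.le_of_dvd two_pos h; omega
  rw [← ZMod.card_units_eq_totient, ← sum_units_eq_zero h2,
    ← sum_range_pow_eq_sum_of_orderOf_eq_card hgen]
  simp only [Units.val_pow_eq_pow_val, hunit.unit_spec]

theorem Nat.sub_one_mul_geom_sum (p t : ℕ) : (p - 1) * ∑ i ∈ range t, p ^ i = p ^ t - 1 := by
  rcases p with _ | k
  · cases t <;> simp
  · have := geom_sum_mul_add k t
    rw [Nat.add_sub_cancel, mul_comm]
    omega

theorem Nat.sub_one_mul_dvd_pow_totient_sub_one {p n : ℕ} (hn : 2 < n)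
    (hp : orderOf (p : ZMod n) = n.totient) : (p - 1) * n ∣ p ^ n.totient - 1 := by
  rw [← Nat.sub_one_mul_geom_sum]
  refine mul_dvd_mul_left _ ((ZMod.natCast_eq_zero_iff _ _).mp ?_)
  push_cast
  exact ZMod.geom_sum_eq_zero_of_orderOf_eq_totient hn hp

def weilSum {F M : Type*} [CommRing F] [Fintype Fˣ] [AddCommMonoid M] (χ : F → M) (d : ℕ)
    (a b : F) : M :=
  ∑ x : Fˣ, χ (a * (x : F) ^ d + b * x)

theorem weilSum_units_mul_of_pow_eq_one {F M : Type*} [CommRing F] [Fintype Fˣ]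
    [AddCommMonoid M] (χ : F → M) {d : ℕ} (a b : F) {u : Fˣ} (hu : u ^ d = 1) :
    weilSum χ d a (u * b) = weilSum χ d a b := by
  refine Fintype.sum_equiv (Equiv.mulLeft u) _ _ fun x => ?_
  have hud : (u : F) ^ d = 1 := by rw [← Units.val_pow_eq_pow_val, hu, Units.val_one]
  simp only [Equiv.coe_mulLeft, Units.val_mul, mul_pow, hud, one_mul]
  ring_nf

theorem stmt_6_general
    (p ℓ m : ℕ) [Fact (Nat.Prime p)]
    (hℓ : Nat.Prime ℓ) (hm : 0 < m)
    (N : ℕ) (hN : N = 2 * ℓ ^ m)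
    (hprim : orderOf (p : ZMod N) = Nat.totient N)
    (e : ℕ) (he : e = Nat.totient N)
    (q : ℕ) (hq : q = p ^ e)
    (F : Type) [Field F] [Fintype F] [DecidableEq F] [Algebra (ZMod p) F]
    (χ : F → ℂ)
    (S : F → F → ℂ)
    (hS : ∀ a b : F, S a b = ∑ x : Fˣ, χ (a * (x : F) ^ ((q - 1) / N) + b * (x : F)))
    :
    ∀ (a b : F), b ≠ 0 → ∀ x : ZMod p, x ≠ 0 →
      S a b = S a (algebraMap (ZMod p) F x * b) := by
  intro a b _ x hx
  have hN2 : 2 < N := by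
    have := Nat.one_lt_pow hm.ne' hℓ.one_lt
    omega
  have hd : p - 1 ∣ (q - 1) / N := by
    obtain ⟨k, hk⟩ := Nat.sub_one_mul_dvd_pow_totient_sub_one hN2 hprim
    exact ⟨k, by rw [hq, he, hk, mul_right_comm, Nat.mul_div_cancel _ (by omega)]⟩
  let u : Fˣ := Units.map (algebraMap (ZMod p) F) (Units.mk0 x hx)
  have hu : u ^ ((q - 1) / N) = 1 := by
    obtain ⟨k, hk⟩ := hd
    rw [hk, pow_mul, ← map_pow, ZMod.units_pow_card_sub_one_eq_one, map_one, one_pow]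
  rw [hS, hS]
  exact (weilSum_units_mul_of_pow_eq_one χ a b hu).symm

theorem stmt_6
    (p ℓ m : ℕ) [Fact (Nat.Prime p)] (hp2 : p ≠ 2)
    (hℓ : Nat.Prime ℓ) (hℓp : ℓ ≠ p) (hm : 0 < m)
    (N : ℕ) (hN : N = 2 * ℓ ^ m)
    (hprim : orderOf (p : ZMod N) = Nat.totient N)
    (e : ℕ) (he : e = Nat.totient N) (he' : e = (ℓ - 1) * ℓ ^ (m - 1))
    (q : ℕ) (hq : q = p ^ e)
    (F : Type) [Field F] [Fintype F] [DecidableEq F] [Algebra (ZMod p) F]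
    (hF : Fintype.card F = q)
    (ζ : ℂ) (hζ : ζ = Complex.exp (2 * (Real.pi : ℂ) * Complex.I / (p : ℂ)))
    (χ : F → ℂ) (hχ : ∀ c : F, χ c = ζ ^ (Algebra.trace (ZMod p) F c).val)
    (S : F → F → ℂ)
    (hS : ∀ a b : F, S a b = ∑ x : Fˣ, χ (a * (x : F) ^ ((q - 1) / N) + b * (x : F)))
    :
    ∀ (a b : F), b ≠ 0 → ∀ x : ZMod p, x ≠ 0 →
      S a b = S a (algebraMap (ZMod p) F x * b) :=
  stmt_6_general p ℓ m hℓ hm N hN hprim e he q hq F χ S hS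
end

section
/- With √q = p^{e/2}: ℓ^m divides √q + 1, the quotient (√q+1)/(2ℓ^m) is a (positive) integer, and p−1 divides (q−1)/(2ℓ^m); consequently x^{(q−1)/N} = 1 for every x ∈ F_p^* (embedded in F_q^*). -/
/-!
Since `p` generates `(ZMod N)ˣ`, this group is cyclic, so its only element of order two is `-1`;
as `p ^ (e / 2)` has order two, `√q ≡ -1 [MOD N]`. Then `(q - 1) / N = (√q + 1) / N * (√q - 1)`
is a multiple of `p - 1`, and Fermat's little theorem finishes.
-/

open Nat

theorem IsCyclic.eq_of_sq_eq_one {G : Type*} [Group G] [Finite G] [IsCyclic G] {x y : G}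
    (hx : x ^ 2 = 1) (hy : y ^ 2 = 1) (hx1 : x ≠ 1) (hy1 : y ≠ 1) : x = y := by
  classical
  have := Fintype.ofFinite G
  by_contra hxy
  have hsub : ({1, x, y} : Finset G) ⊆ ({a | a ^ 2 = 1} : Finset G) := by
    intro a ha
    simp only [Finset.mem_insert, Finset.mem_singleton] at ha
    rcases ha with rfl | rfl | rfl <;> simp [*]
  have := (Finset.card_le_card hsub).trans (IsCyclic.card_pow_eq_one_le two_pos)
  rw [Finset.card_insert_of_notMem (by simp [hx1.symm, hy1.symm]), Finset.card_pair hxy] at this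
  omega

theorem ZMod.pow_totient_div_two_eq_neg_one {n : ℕ} (hn : 2 < n) {a : ZMod n}
    (ha : orderOf a = φ n) : a ^ (φ n / 2) = -1 := by
  have : NeZero n := ⟨by omega⟩
  have : Fact (2 < n) := ⟨hn⟩
  have htot : 2 ≤ φ n := by
    have := totient_even hn
    have := totient_pos.2 (show 0 < n by omega)
    grind
  obtain ⟨u, rfl⟩ : IsUnit a := (orderOf_pos_iff.1 (by omega)).isUnit
  rw [orderOf_units] at ha
  have : IsCyclic (ZMod n)ˣ := isCyclic_of_orderOf_eq_card u <| by
    rw [ha, Nat.card_eq_fintype_card, ZMod.card_units_eq_totient]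
  have hsq : (u ^ (φ n / 2)) ^ 2 = 1 := by
    rw [← pow_mul, Nat.div_mul_cancel (totient_even hn).two_dvd, ← ha, pow_orderOf_eq_one]
  have hne : u ^ (φ n / 2) ≠ 1 := pow_ne_one_of_lt_orderOf (by omega) (by omega)
  have hneg : (-1 : (ZMod n)ˣ) ≠ 1 := fun h => ZMod.neg_one_ne_one (congrArg Units.val h)
  rw [← Units.val_pow_eq_pow_val, IsCyclic.eq_of_sq_eq_one hsq (by simp) hne hneg]
  simp

theorem Nat.sub_one_dvd_pow_two_mul_sub_one_div {b k n : ℕ} (h : n ∣ b ^ k + 1) :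
    b - 1 ∣ (b ^ (2 * k) - 1) / n := by
  obtain ⟨c, hc⟩ := h
  have hn : 0 < n := Nat.pos_of_ne_zero (by rintro rfl; simp at hc)
  have hfac : b ^ (2 * k) - 1 = n * (c * (b ^ k - 1)) := by
    rw [← mul_assoc, ← hc, pow_mul', ← Nat.sq_sub_sq, one_pow]
  rw [hfac, Nat.mul_div_cancel_left _ hn]
  exact dvd_mul_of_dvd_right (by simpa using Nat.sub_dvd_pow_sub_pow b 1 k) c

theorem stmt_7_general
    (p ℓ m : ℕ) [Fact (Nat.Prime p)]
    (hℓ : Nat.Prime ℓ) (hm : 0 < m)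
    (N : ℕ) (hN : N = 2 * ℓ ^ m)
    (hprim : orderOf (p : ZMod N) = Nat.totient N)
    (e : ℕ) (he : e = Nat.totient N)
    (q : ℕ) (hq : q = p ^ e)
    (F : Type) [Field F] [Algebra (ZMod p) F]
    :
    ℓ ^ m ∣ p ^ (e / 2) + 1 ∧
    2 * ℓ ^ m ∣ p ^ (e / 2) + 1 ∧
    0 < (p ^ (e / 2) + 1) / (2 * ℓ ^ m) ∧
    (p - 1) ∣ (q - 1) / (2 * ℓ ^ m) ∧
    ∀ x : ZMod p, x ≠ 0 → algebraMap (ZMod p) F x ^ ((q - 1) / N) = 1 := by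
  have hN2 : 2 < N := by
    have := Nat.one_lt_pow hm.ne' hℓ.one_lt
    omega
  have he2 : e = 2 * (e / 2) := (Nat.mul_div_cancel' (he ▸ totient_even hN2).two_dvd).symm
  have hdvd : N ∣ p ^ (e / 2) + 1 := by
    rw [← ZMod.natCast_eq_zero_iff]
    push_cast
    rw [he, ZMod.pow_totient_div_two_eq_neg_one hN2 hprim, neg_add_cancel]
  have hsub : p - 1 ∣ (q - 1) / N := by
    rw [hq, he2]
    exact Nat.sub_one_dvd_pow_two_mul_sub_one_div hdvd
  subst hN
  refine ⟨dvd_of_mul_left_dvd hdvd, hdvd,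
    Nat.div_pos (Nat.le_of_dvd (by positivity) hdvd) (by positivity), hsub, fun x hx => ?_⟩
  obtain ⟨k, hk⟩ := hsub
  rw [hk, pow_mul, ← map_pow, ZMod.pow_card_sub_one_eq_one hx, map_one, one_pow]

theorem stmt_7
    (p ℓ m : ℕ) [Fact (Nat.Prime p)] (hp2 : p ≠ 2)
    (hℓ : Nat.Prime ℓ) (hℓp : ℓ ≠ p) (hm : 0 < m)
    (N : ℕ) (hN : N = 2 * ℓ ^ m)
    (hprim : orderOf (p : ZMod N) = Nat.totient N)
    (e : ℕ) (he : e = Nat.totient N) (he' : e = (ℓ - 1) * ℓ ^ (m - 1))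
    (q : ℕ) (hq : q = p ^ e)
    (F : Type) [Field F] [Fintype F] [DecidableEq F] [Algebra (ZMod p) F]
    (hF : Fintype.card F = q)
    :
    ℓ ^ m ∣ p ^ (e / 2) + 1 ∧
    2 * ℓ ^ m ∣ p ^ (e / 2) + 1 ∧
    0 < (p ^ (e / 2) + 1) / (2 * ℓ ^ m) ∧
    (p - 1) ∣ (q - 1) / (2 * ℓ ^ m) ∧
    ∀ x : ZMod p, x ≠ 0 → algebraMap (ZMod p) F x ^ ((q - 1) / N) = 1 :=
  stmt_7_general p ℓ m hℓ hm N hN hprim e he q hq F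
end

section
/- Let α ∈ F_p, β ∈ F_q, D = {d_1,…,d_n}, and for γ ∈ F_q^* let c_γ = (Tr(d_1·γ),…,Tr(d_n·γ)) ∈ F_p^n. Then the Hamming weight of c_γ satisfies wt(c_γ) = (1/p²)·( (p−1)q + (p−1)·w(α,β) − Σ_{z ∈ F_p^*} w(α, β + z·γ) ). -/
/-!
Orthogonality of the additive characters of `𝔽_p` turns `w(α, x)` into `p · n(x) - (q - 1)`,
where `n(x) = traceFiberCard` counts the `u ≠ 0` with `Tr(u^M + x u) = α`. Summing `n(β + zγ)` over
`z ∈ 𝔽_p` counts every `u` once per solution `z` of `Tr(u^M + βu) + z Tr(γu) = α`: `p` times if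
`Tr(γu) = 0` and `Tr(u^M + βu) = α`, once if `Tr(γu) ≠ 0`. As `x ↦ Tr(γx)` maps onto `𝔽_p`, its
kernel has `q / p` elements, and the weight formula becomes a linear identity between these counts.
-/

open Finset

lemma sum_units_eq_sum_erase_zero {G₀ M : Type*} [GroupWithZero G₀] [Fintype G₀] [DecidableEq G₀]
    [AddCommMonoid M] (g : G₀ → M) : ∑ u : G₀ˣ, g u = ∑ x ∈ univ.erase 0, g x := by
  refine sum_nbij' (↑) (fun x => if h : x = 0 then 1 else Units.mk0 x h) ?_ ?_ ?_ ?_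
    (fun _ _ => rfl)
  · simp
  · simp
  · simp
  · intro x hx
    simp [ne_of_mem_erase hx]

namespace AddChar

variable {K R : Type*} [Field K] [Fintype K] [DecidableEq K] [CommRing R] [IsDomain R]
  {ψ : AddChar K R}

lemma sum_units_mulShift (hψ : ψ.IsPrimitive) (c : K) :
    ∑ y : Kˣ, ψ (y * c) = (if c = 0 then (Fintype.card K : R) else 0) - 1 := by
  rw [sum_units_eq_sum_erase_zero (fun y => ψ (y * c)), sum_erase_eq_sub (mem_univ 0),
    sum_mulShift c hψ, zero_mul, map_zero_eq_one, Nat.cast_ite, Nat.cast_zero]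

lemma sum_units_mul_sum_eq_card_filter (hψ : ψ.IsPrimitive) {ι : Type*} (s : Finset ι)
    (f : ι → K) (a : K) :
    ∑ y : Kˣ, ψ (-y * a) * ∑ i ∈ s, ψ (y * f i) = Fintype.card K * #{i ∈ s | f i = a} - #s := by
  calc _ = ∑ i ∈ s, ∑ y : Kˣ, ψ (y * (f i - a)) := by
        rw [sum_comm]
        simp_rw [mul_sum, ← map_add_eq_mul, neg_mul, mul_sub, neg_add_eq_sub]
    _ = ∑ i ∈ s, (Fintype.card K * (if f i = a then 1 else 0) - 1 : R) := by
        simp_rw [sum_units_mulShift hψ, sub_eq_zero, mul_boole]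
    _ = _ := by
        rw [sum_sub_distrib, ← mul_sum, sum_boole, sum_const, nsmul_one]

end AddChar

lemma card_filter_add_mul_eq {K : Type*} [Field K] [Fintype K] [DecidableEq K] (a b c : K) :
    #{z : K | a + z * b = c} = if b = 0 then (if a = c then Fintype.card K else 0) else 1 := by
  split_ifs with hb hac
  · simp [hb, hac]
  · simp [hb, hac]
  · rw [card_eq_one]
    refine ⟨(c - a) / b, ?_⟩
    ext z
    simp [eq_div_iff hb, eq_sub_iff_add_eq']

lemma sum_card_filter_add_mul_eq {K ι : Type*} [Field K] [Fintype K] [DecidableEq K]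
    (s : Finset ι) (f g : ι → K) (a : K) :
    ∑ z : K, #{i ∈ s | f i + z * g i = a} =
      Fintype.card K * #{i ∈ s | f i = a ∧ g i = 0} + #{i ∈ s | g i ≠ 0} := by
  calc _ = ∑ i ∈ s, #{z : K | f i + z * g i = a} := by
        simp_rw [card_filter]
        exact sum_comm
    _ = ∑ i ∈ s, (Fintype.card K * (if f i = a ∧ g i = 0 then 1 else 0) +
          if g i ≠ 0 then 1 else 0) := by
        refine sum_congr rfl fun i _ => ?_
        rw [card_filter_add_mul_eq]
        split_ifs <;> simp_all
    _ = _ := by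
        rw [sum_add_distrib, ← mul_sum, sum_boole, sum_boole, Nat.cast_id, Nat.cast_id]

lemma AddMonoidHom.card_mul_card_filter_eq_zero {G H : Type*} [AddGroup G] [Fintype G]
    [AddMonoid H] [Fintype H] [DecidableEq H] {f : G →+ H} (hf : Function.Surjective f) :
    Fintype.card H * #{g | f g = 0} = Fintype.card G := by
  have h := card_eq_sum_card_fiberwise (f := f) (s := univ) (t := univ) fun _ _ => mem_univ _
  rw [sum_congr rfl fun h _ => card_fiber_eq_of_mem_range f (hf h) (hf 0), sum_const, card_univ,
    card_univ, smul_eq_mul] at h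
  exact h.symm

lemma card_mul_card_filter_trace_mul_eq_zero {K L : Type*} [Field K] [Fintype K] [DecidableEq K]
    [Field L] [Fintype L] [Algebra K L] {γ : L} (hγ : γ ≠ 0) :
    Fintype.card K * #{x : L | Algebra.trace K L (γ * x) = 0} = Fintype.card L := by
  let f : L →+ K := (Algebra.trace K L).toAddMonoidHom.comp (AddMonoidHom.mulLeft γ)
  refine AddMonoidHom.card_mul_card_filter_eq_zero (f := f) fun t => ?_
  obtain ⟨x, rfl⟩ := Algebra.trace_surjective K L t
  exact ⟨γ⁻¹ * x, by simp [f, hγ]⟩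

lemma Algebra.trace_algebraMap_mul {R S : Type*} [CommRing R] [CommRing S] [Algebra R S]
    (t : R) (x : S) : Algebra.trace R S (algebraMap R S t * x) = t * Algebra.trace R S x := by
  rw [← Algebra.smul_def, map_smul, smul_eq_mul]

section TraceCount

variable {K L : Type*} [Field K] [DecidableEq K] [Field L] [Fintype L] [DecidableEq L]
  [Algebra K L]

variable (K) in
noncomputable def traceFiberCard (M : ℕ) (a : K) (x : L) : ℕ :=
  #{u ∈ univ.erase 0 | Algebra.trace K L (u ^ M + x * u) = a}

lemma sum_units_mul_sum_units_trace_eq [Fintype K] {ψ : AddChar K ℂ} (hψ : ψ.IsPrimitive)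
    (M : ℕ) (a : K) (x : L) :
    ∑ y : Kˣ, ψ (-y * a) * ∑ u : Lˣ, ψ (Algebra.trace K L
        (algebraMap K L y * (u : L) ^ M + algebraMap K L y * x * u)) =
      Fintype.card K * traceFiberCard K M a x - (Fintype.card L - 1) := by
  have hcard : ((univ.erase (0 : L)).card : ℂ) = Fintype.card L - 1 := by
    rw [card_erase_of_mem (mem_univ _), card_univ, Nat.cast_pred Fintype.card_pos]
  have hinner : ∀ y : Kˣ, ∑ u : Lˣ, ψ (Algebra.trace K L
      (algebraMap K L y * (u : L) ^ M + algebraMap K L y * x * u)) =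
        ∑ u ∈ univ.erase 0, ψ (y * Algebra.trace K L (u ^ M + x * u)) := fun y => by
    rw [sum_units_eq_sum_erase_zero fun u : L => ψ (Algebra.trace K L
      (algebraMap K L y * u ^ M + algebraMap K L y * x * u))]
    simp_rw [mul_assoc, ← mul_add, Algebra.trace_algebraMap_mul]
  simp_rw [hinner]
  rw [AddChar.sum_units_mul_sum_eq_card_filter hψ, hcard, traceFiberCard]

lemma traceFiberCard_eq_card_add_card (M : ℕ) (a : K) (x γ : L) :
    traceFiberCard K M a x =
      #{u ∈ univ.erase 0 |
          Algebra.trace K L (u ^ M + x * u) = a ∧ Algebra.trace K L (γ * u) = 0} +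
        #{u ∈ univ.erase 0 |
          Algebra.trace K L (u ^ M + x * u) = a ∧ Algebra.trace K L (γ * u) ≠ 0} := by
  simp only [traceFiberCard, ← filter_filter, card_filter_add_card_filter_not]

lemma sum_traceFiberCard_add_mul [Fintype K] (M : ℕ) (a : K) (x γ : L) :
    ∑ z : K, traceFiberCard K M a (x + algebraMap K L z * γ) =
      Fintype.card K * #{u ∈ univ.erase 0 |
          Algebra.trace K L (u ^ M + x * u) = a ∧ Algebra.trace K L (γ * u) = 0} +
        #{u ∈ univ.erase 0 | Algebra.trace K L (γ * u) ≠ 0} := by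
  rw [← sum_card_filter_add_mul_eq]
  refine sum_congr rfl fun z _ => ?_
  simp only [traceFiberCard, add_mul, add_assoc, map_add, mul_assoc,
    Algebra.trace_algebraMap_mul]

lemma card_mul_card_filter_trace_mul_ne_zero [Fintype K] {γ : L} (hγ : γ ≠ 0) :
    Fintype.card K * #{u ∈ univ.erase 0 | Algebra.trace K L (γ * u) ≠ 0} + Fintype.card L =
      Fintype.card K * Fintype.card L := by
  have hsplit := card_filter_add_card_filter_not (s := univ) fun u => Algebra.trace K L (γ * u) = 0
  rw [card_univ, add_comm] at hsplit
  rw [filter_erase, erase_eq_of_notMem (by simp)]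
  calc _ = Fintype.card K * #{u | Algebra.trace K L (γ * u) ≠ 0} +
        Fintype.card K * #{u | Algebra.trace K L (γ * u) = 0} := by
        rw [card_mul_card_filter_trace_mul_eq_zero hγ]
    _ = _ := by rw [← mul_add, hsplit]

end TraceCount

theorem stmt_14_general
    (p : ℕ) [Fact (Nat.Prime p)]
    (N : ℕ)
    (q : ℕ)
    (F : Type) [Field F] [Fintype F] [DecidableEq F] [Algebra (ZMod p) F]
    (hF : Fintype.card F = q)
    (ζ : ℂ) (hζ : ζ = Complex.exp (2 * (Real.pi : ℂ) * Complex.I / (p : ℂ)))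
    (χ : F → ℂ) (hχ : ∀ c : F, χ c = ζ ^ (Algebra.trace (ZMod p) F c).val)
    (S : F → F → ℂ)
    (hS : ∀ a b : F, S a b = ∑ x : Fˣ, χ (a * (x : F) ^ ((q - 1) / N) + b * (x : F)))
    (w : ZMod p → F → ℂ)
    (hw : ∀ (α : ZMod p) (x : F), w α x =
      ∑ y : (ZMod p)ˣ, ζ ^ (((-(y : ZMod p)) * α).val) *
        S (algebraMap (ZMod p) F (y : ZMod p)) (algebraMap (ZMod p) F (y : ZMod p) * x))
    (α : ZMod p) (β : F)
    (D : Finset F)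
    (hD : D = Finset.univ.filter (fun x : F =>
      x ≠ 0 ∧ Algebra.trace (ZMod p) F (x ^ ((q - 1) / N) + β * x) = α))
    (γ : F) (hγ : γ ≠ 0) :
    (((D.filter (fun d => Algebra.trace (ZMod p) F (d * γ) ≠ 0)).card : ℂ)) =
      1 / (p : ℂ) ^ 2 * (((p : ℂ) - 1) * (q : ℂ) + ((p : ℂ) - 1) * w α β -
        ∑ z : (ZMod p)ˣ, w α (β + algebraMap (ZMod p) F (z : ZMod p) * γ)) := by
  set M := (q - 1) / N
  have hp : (p : ℂ) ≠ 0 := Nat.cast_ne_zero.mpr (Fact.out : p.Prime).ne_zero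
  have hζp : IsPrimitiveRoot ζ p := hζ ▸ Complex.isPrimitiveRoot_exp p (Fact.out : p.Prime).ne_zero
  have hW : ∀ x, w α x = p * traceFiberCard (ZMod p) M α x - (q - 1) := fun x => by
    simp_rw [hw, hS, hχ, ← AddChar.zmodChar_apply hζp.pow_eq_one]
    rw [sum_units_mul_sum_units_trace_eq (AddChar.zmodChar_primitive_of_primitive_root p hζp),
      ZMod.card, hF]
  have hZ := sum_traceFiberCard_add_mul M α β γ
  have hsplit := congrArg (Nat.cast (R := ℂ)) (traceFiberCard_eq_card_add_card M α β γ)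
  have hK := congrArg (Nat.cast (R := ℂ)) (card_mul_card_filter_trace_mul_ne_zero (K := ZMod p) hγ)
  have hD' : D.filter (fun d => Algebra.trace (ZMod p) F (d * γ) ≠ 0) =
      {u ∈ univ.erase (0 : F) | Algebra.trace (ZMod p) F (u ^ M + β * u) = α ∧
        Algebra.trace (ZMod p) F (γ * u) ≠ 0} := by
    simp only [hD, ← filter_ne', filter_filter, and_assoc, mul_comm _ γ]
  rw [ZMod.card] at hZ
  rw [ZMod.card, hF] at hK
  rw [hD', sum_units_eq_sum_erase_zero fun z => w α (β + algebraMap (ZMod p) F z * γ),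
    sum_erase_eq_sub (mem_univ 0)]
  simp only [hW, sum_sub_distrib, ← mul_sum, ← Nat.cast_sum, hZ, map_zero, zero_mul, add_zero,
    sum_const, card_univ, ZMod.card, nsmul_eq_mul]
  rw [eq_comm, one_div, inv_mul_eq_iff_eq_mul₀ (pow_ne_zero 2 hp)]
  push_cast at hsplit hK ⊢
  linear_combination (p : ℂ) ^ 2 * hsplit - hK

theorem stmt_14
    (p ℓ m : ℕ) [Fact (Nat.Prime p)] (hp2 : p ≠ 2)
    (hℓ : Nat.Prime ℓ) (hℓp : ℓ ≠ p) (hm : 0 < m)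
    (N : ℕ) (hN : N = 2 * ℓ ^ m)
    (hprim : orderOf (p : ZMod N) = Nat.totient N)
    (e : ℕ) (he : e = Nat.totient N) (he' : e = (ℓ - 1) * ℓ ^ (m - 1))
    (q : ℕ) (hq : q = p ^ e)
    (F : Type) [Field F] [Fintype F] [DecidableEq F] [Algebra (ZMod p) F]
    (hF : Fintype.card F = q)
    (ζ : ℂ) (hζ : ζ = Complex.exp (2 * (Real.pi : ℂ) * Complex.I / (p : ℂ)))
    (χ : F → ℂ) (hχ : ∀ c : F, χ c = ζ ^ (Algebra.trace (ZMod p) F c).val)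
    (S : F → F → ℂ)
    (hS : ∀ a b : F, S a b = ∑ x : Fˣ, χ (a * (x : F) ^ ((q - 1) / N) + b * (x : F)))
    (w : ZMod p → F → ℂ)
    (hw : ∀ (α : ZMod p) (x : F), w α x =
      ∑ y : (ZMod p)ˣ, ζ ^ (((-(y : ZMod p)) * α).val) *
        S (algebraMap (ZMod p) F (y : ZMod p)) (algebraMap (ZMod p) F (y : ZMod p) * x))
    (α : ZMod p) (β : F)
    (D : Finset F)
    (hD : D = Finset.univ.filter (fun x : F =>
      x ≠ 0 ∧ Algebra.trace (ZMod p) F (x ^ ((q - 1) / N) + β * x) = α))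
    (γ : F) (hγ : γ ≠ 0) :
    (((D.filter (fun d => Algebra.trace (ZMod p) F (d * γ) ≠ 0)).card : ℂ)) =
      1 / (p : ℂ) ^ 2 * (((p : ℂ) - 1) * (q : ℂ) + ((p : ℂ) - 1) * w α β -
        ∑ z : (ZMod p)ˣ, w α (β + algebraMap (ZMod p) F (z : ZMod p) * γ)) :=
  stmt_14_general p N q F hF ζ hζ χ hχ S hS w hw α β D hD γ hγ
end

section
/- Suppose α ∈ F_p with α ≠ 0, β ∈ F_q with β ≠ 0, and the four elements a_1, a_2, a_3, a_4 of F_p are all nonzero. Then: (1) n = q/p; (2) the map γ ↦ c_γ from F_q to F_p^n is injective (so C_{α,β} has dimension (ℓ−1)ℓ^{m−1}); (3) every γ ∈ F_q^* satisfies wt(c_γ) = q/p or wt(c_γ) = (p−1)q/p²; and (4) #{γ ∈ F_q^* : wt(c_γ) = q/p} = p−1 and #{γ ∈ F_q^* : wt(c_γ) = (p−1)q/p²} = q−p. -/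
open Finset
open scoped Nat

/-!
Put `k = (q - 1) / N`. For `x ≠ 0` the element `y = x ^ k` is an `N`-th root of unity, and since
`p` generates `(ℤ/N)ˣ` the conjugates `y ^ (p ^ i)` are exactly the `y ^ a` with `a` prime to `N`.
Inclusion–exclusion over the primes `2` and `ℓ` then shows that `Tr y` is one of
`±ℓ^(m-1)(ℓ-1)`, `±ℓ^(m-1)`, `0`, so the hypotheses make `g x = α - Tr (x ^ k)` nonzero on `F_q^*`.
Moreover `(p - 1) N ∣ q - 1` (the powers of `p` modulo `N` sum to the reduced residues, whose sum
vanishes modulo `N`), so `g` is invariant under scaling by `F_p^*`.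

Hence `x ↦ x / Tr (β x)` is a bijection from `D = {x ≠ 0 | Tr (β x) = g x}` onto the affine
hyperplane `Tr (β w) = 1` that respects every scale-invariant condition, such as `Tr (x γ) ≠ 0`.
The weight of `c_γ` is thus the number of points `w` of that hyperplane with `Tr (γ w) ≠ 0`: all
`q / p` of them if `γ ∈ F_p^* β`, and `(p - 1) q / p²` otherwise, because then
`w ↦ (Tr (β w), Tr (γ w))` maps onto `F_p²`.
-/

namespace Nat

theorem sum_range_totient_pow_mod {M : Type*} [AddCommMonoid M] {r N : ℕ}
    (hr : orderOf (r : ZMod N) = φ N) (f : ℕ → M) :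
    ∑ i ∈ range (φ N), f (r ^ i % N) = ∑ a ∈ {a ∈ range N | N.Coprime a}, f a := by
  rcases N.eq_zero_or_pos with rfl | hN
  · simp
  have hinj : Set.InjOn (fun i => r ^ i % N) (range (φ N)) := by
    intro i hi j hj hij
    refine pow_injOn_Iio_orderOf (x := (r : ZMod N)) (by simpa [hr] using hi)
      (by simpa [hr] using hj) ?_
    exact_mod_cast (ZMod.natCast_eq_natCast_iff' (r ^ i) (r ^ j) N).mpr hij
  have hcop : N.Coprime r := by
    have : IsUnit (r : ZMod N) := (orderOf_pos_iff.mp (hr ▸ totient_pos.mpr hN)).isUnit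
    exact ((ZMod.isUnit_iff_coprime r N).mp this).symm
  have himage : (range (φ N)).image (fun i => r ^ i % N) = {a ∈ range N | N.Coprime a} := by
    refine eq_of_subset_of_card_le (fun a ha => ?_) ?_
    · obtain ⟨i, -, rfl⟩ := mem_image.mp ha
      simp only [mem_filter, mem_range]
      refine ⟨mod_lt _ hN, ?_⟩
      rw [Nat.Coprime, Nat.gcd_comm, ← Nat.gcd_rec]
      exact hcop.pow_right i
    · rw [Finset.card_image_of_injOn hinj, card_range]; rfl
  rw [← himage, sum_image hinj]

theorem sum_coprime_residues_eq_zero {N : ℕ} (hN : 2 < N) :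
    ∑ a ∈ {a ∈ range N | N.Coprime a}, (a : ZMod N) = 0 := by
  refine sum_involution (fun a _ => N - a) (fun a ha => ?_) (fun a ha _ => ?_) (fun a ha => ?_)
    (fun a ha => ?_)
  all_goals simp only [mem_filter, mem_range] at ha
  · rw [Nat.cast_sub ha.1.le, ZMod.natCast_self]; ring
  · intro h
    have h1 : a = 1 := Nat.Coprime.eq_one_of_dvd ha.2.symm ⟨2, by omega⟩
    omega
  · have ha0 : a ≠ 0 := by
      rintro rfl
      exact absurd (Nat.coprime_zero_right N |>.mp ha.2) (by omega)
    simp only [mem_filter, mem_range]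
    exact ⟨by omega, (coprime_self_sub_right ha.1.le).mpr ha.2⟩
  · omega

theorem dvd_geom_sum_of_orderOf_eq_totient {r N : ℕ} (hN : 2 < N)
    (hr : orderOf (r : ZMod N) = φ N) : N ∣ ∑ i ∈ range (φ N), r ^ i := by
  rw [← ZMod.natCast_eq_zero_iff]
  push_cast
  rw [← sum_coprime_residues_eq_zero hN, ← sum_range_totient_pow_mod hr]
  simp [ZMod.natCast_mod]

theorem mul_sub_one_dvd_pow_sub_one_of_dvd_geom_sum {r N n : ℕ}
    (h : N ∣ ∑ i ∈ range n, r ^ i) : N * (r - 1) ∣ r ^ n - 1 := by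
  obtain ⟨t, ht⟩ := h
  rcases r with _ | r
  · rcases n with _ | n <;> simp
  · refine ⟨t, ?_⟩
    rw [← geom_sum_mul_add r n, ht, Nat.add_sub_cancel, Nat.add_sub_cancel]
    ring

theorem coprime_two_mul_pow_iff {ℓ m a : ℕ} (hℓ : ℓ.Prime) (hm : m ≠ 0) :
    (2 * ℓ ^ m).Coprime a ↔ ¬ 2 ∣ a ∧ ¬ ℓ ∣ a := by
  rw [coprime_mul_iff_left, coprime_pow_left_iff (pos_of_ne_zero hm),
    prime_two.coprime_iff_not_dvd, hℓ.coprime_iff_not_dvd]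

theorem ne_two_of_totient_two_mul_pow {ℓ m : ℕ} (h : φ (2 * ℓ ^ (m + 1)) = (ℓ - 1) * ℓ ^ m) :
    ℓ ≠ 2 := by
  rintro rfl
  rw [← pow_succ', totient_prime_pow_succ prime_two, pow_succ] at h
  have := Nat.one_le_two_pow (n := m)
  omega

theorem sub_one_mul_div_sq_lt_div {p q : ℕ} (hq : 0 < q) (hpq : p ∣ q) :
    (p - 1) * q / p ^ 2 < q / p := by
  have hp : 0 < p := pos_of_dvd_of_pos hpq hq
  rw [div_lt_iff_lt_mul (by positivity), sq, ← mul_assoc, Nat.div_mul_cancel hpq, mul_comm q p]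
  exact mul_lt_mul_of_pos_right (by omega) hq

end Nat

theorem Finset.sum_filter_not_dvd_and_not_dvd {M : Type*} [AddCommGroup M] {d₁ d₂ : ℕ}
    (h : d₁.Coprime d₂) (s : Finset ℕ) (f : ℕ → M) :
    ∑ a ∈ s with ¬ d₁ ∣ a ∧ ¬ d₂ ∣ a, f a = ∑ a ∈ s, f a - ∑ a ∈ s with d₁ ∣ a, f a
      - ∑ a ∈ s with d₂ ∣ a, f a + ∑ a ∈ s with d₁ * d₂ ∣ a, f a := by
  simp only [sum_filter, ← sum_sub_distrib, ← sum_add_distrib]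
  refine sum_congr rfl fun a _ => ?_
  have hdvd : d₁ * d₂ ∣ a ↔ d₁ ∣ a ∧ d₂ ∣ a :=
    ⟨fun h' => ⟨dvd_of_mul_right_dvd h', dvd_of_mul_left_dvd h'⟩,
      fun ⟨h₁, h₂⟩ => h.mul_dvd_of_dvd_of_dvd h₁ h₂⟩
  by_cases h₁ : d₁ ∣ a <;> by_cases h₂ : d₂ ∣ a <;> simp [hdvd, h₁, h₂]

theorem sum_range_filter_dvd_pow_s17 {R : Type*} [CommRing R] [IsDomain R] [DecidableEq R]
    {y : R} {d k n : ℕ} (hd : 0 < d) (hn : d * k = n) (hy : y ^ n = 1) :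
    ∑ a ∈ range n with d ∣ a, y ^ a = if y ^ d = 1 then (k : R) else 0 := by
  subst hn
  have himage : {a ∈ range (d * k) | d ∣ a} = (range k).image (d * ·) := by
    ext a
    simp only [mem_filter, mem_range, mem_image]
    constructor
    · rintro ⟨ha, j, rfl⟩
      exact ⟨j, Nat.lt_of_mul_lt_mul_left ha, rfl⟩
    · rintro ⟨j, hj, rfl⟩
      exact ⟨Nat.mul_lt_mul_of_pos_left hj hd, dvd_mul_right d j⟩
  rw [himage, sum_image fun i _ j _ h => Nat.eq_of_mul_eq_mul_left hd h]
  simp_rw [pow_mul]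
  split_ifs with h
  · simp [h]
  · have := geom_sum_mul (y ^ d) k
    rw [← pow_mul, hy, sub_self] at this
    exact (mul_eq_zero.mp this).resolve_right (sub_ne_zero.mpr h)

section RootsOfUnity

variable {K L : Type*} [Field K] [Field L] [Finite L] [Algebra K L] {ℓ m : ℕ}

theorem algebraMap_trace_eq_of_pow_eq_one [DecidableEq L] (hℓ : ℓ.Prime) (hℓ2 : ℓ ≠ 2)
    (hprim : orderOf (Nat.card K : ZMod (2 * ℓ ^ (m + 1))) = φ (2 * ℓ ^ (m + 1)))
    (hfr : Module.finrank K L = φ (2 * ℓ ^ (m + 1))) {y : L} (hy : y ^ (2 * ℓ ^ (m + 1)) = 1) :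
    algebraMap K L (Algebra.trace K L y) =
      (if y = 1 then ((2 * ℓ ^ (m + 1) : ℕ) : L) else 0)
        - (if y ^ 2 = 1 then ((ℓ ^ (m + 1) : ℕ) : L) else 0)
        - (if y ^ ℓ = 1 then ((2 * ℓ ^ m : ℕ) : L) else 0)
        + (if y ^ (2 * ℓ) = 1 then ((ℓ ^ m : ℕ) : L) else 0) := by
  set N := 2 * ℓ ^ (m + 1)
  have hcop : Nat.Coprime 2 ℓ := (Nat.coprime_primes Nat.prime_two hℓ).mpr (Ne.symm hℓ2)
  rw [FiniteField.algebraMap_trace_eq_sum_pow, hfr]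
  calc ∑ i ∈ range (φ N), y ^ (Nat.card K ^ i)
      = ∑ i ∈ range (φ N), y ^ (Nat.card K ^ i % N) := by simp_rw [← pow_eq_pow_mod _ hy]
    _ = ∑ a ∈ range N with N.Coprime a, y ^ a := Nat.sum_range_totient_pow_mod hprim _
    _ = ∑ a ∈ range N with ¬ 2 ∣ a ∧ ¬ ℓ ∣ a, y ^ a := by
      simp_rw [N, Nat.coprime_two_mul_pow_iff hℓ (Nat.succ_ne_zero m)]
    _ = _ := by
      have hall : ∑ a ∈ range N, y ^ a = if y = 1 then (N : L) else 0 := by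
        simpa using sum_range_filter_dvd_pow_s17 one_pos (one_mul N) hy
      rw [sum_filter_not_dvd_and_not_dvd hcop, hall, sum_range_filter_dvd_pow_s17 two_pos rfl hy,
        sum_range_filter_dvd_pow_s17 hℓ.pos (k := 2 * ℓ ^ m) (by ring) hy,
        sum_range_filter_dvd_pow_s17 (k := ℓ ^ m) (Nat.mul_pos two_pos hℓ.pos) (by ring) hy]

theorem trace_eq_of_pow_eq_one (hℓ : ℓ.Prime) (hℓ2 : ℓ ≠ 2)
    (hprim : orderOf (Nat.card K : ZMod (2 * ℓ ^ (m + 1))) = φ (2 * ℓ ^ (m + 1)))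
    (hfr : Module.finrank K L = φ (2 * ℓ ^ (m + 1))) {y : L} (hy : y ^ (2 * ℓ ^ (m + 1)) = 1) :
    Algebra.trace K L y = (ℓ : K) ^ m * (ℓ - 1) ∨ Algebra.trace K L y = -((ℓ : K) ^ m * (ℓ - 1)) ∨
      Algebra.trace K L y = (ℓ : K) ^ m ∨ Algebra.trace K L y = -(ℓ : K) ^ m ∨
      Algebra.trace K L y = 0 := by
  classical
  have key := algebraMap_trace_eq_of_pow_eq_one hℓ hℓ2 hprim hfr hy
  have inj := (algebraMap K L).injective
  obtain ⟨k, hk⟩ := hℓ.odd_of_ne_two hℓ2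
  by_cases h1 : y = 1
  · left; apply inj; rw [key]; simp [h1]; ring
  by_cases h2 : y ^ 2 = 1
  · have hyℓ : y ^ ℓ = y := by rw [hk, pow_succ, pow_mul, h2, one_pow, one_mul]
    right; left; apply inj; rw [key]; simp [h1, h2, hyℓ, pow_mul]; ring
  by_cases h3 : y ^ ℓ = 1
  · right; right; right; left; apply inj; rw [key]; simp [h1, h2, h3, mul_comm 2 ℓ, pow_mul]; ring
  by_cases h4 : y ^ (2 * ℓ) = 1
  · right; right; left; apply inj; rw [key]; simp [h1, h2, h3, h4]
  · right; right; right; right; apply inj; rw [key]; simp [h1, h2, h3, h4]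

end RootsOfUnity

theorem AddMonoidHom.card_preimage_mul_card {G H : Type*} [AddGroup G] [Fintype G] [AddGroup H]
    [Fintype H] [DecidableEq H] (f : G →+ H) (hf : Function.Surjective f) (S : Finset H) :
    #{x | f x ∈ S} * Fintype.card H = #S * Fintype.card G := by
  have hfib (y : H) : #{x | f x = y} = #{x | f x = 0} :=
    AddMonoidHom.card_fiber_eq_of_mem_range f (hf y) (hf 0)
  have hcard (S : Finset H) : #{x | f x ∈ S} = #S * #{x | f x = 0} := by
    rw [← sum_card_fiberwise_eq_card_filter, sum_congr rfl fun y _ => hfib y, sum_const,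
      smul_eq_mul]
  have huniv := hcard univ
  rw [filter_true_of_mem (fun x _ => mem_univ _), card_univ, card_univ] at huniv
  rw [hcard, huniv]
  ring

theorem LinearMap.surjective_prod_of_notMem_span_singleton {K V : Type*} [Field K]
    [AddCommGroup V] [Module K V] {f g : V →ₗ[K] K} (hf : f ≠ 0) (hg : g ∉ K ∙ f) :
    Function.Surjective (f.prod g) := by
  obtain ⟨z, hz⟩ := LinearMap.surjective_of_ne_zero hf 1
  obtain ⟨x₀, hx₀f, hx₀g⟩ : ∃ x₀, f x₀ = 0 ∧ g x₀ ≠ 0 := by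
    by_contra! h
    refine hg ?_
    have := mem_span_of_iInf_ker_le_ker (L := fun _ : Unit => f) (K := g)
      (fun x hx => by simpa using h x (by simpa using hx))
    simpa [Set.range_const] using this
  rintro ⟨a, b⟩
  refine ⟨a • z + ((b - a * g z) / g x₀) • x₀, ?_⟩
  simp [hz, hx₀f]
  field_simp
  ring

section TraceForm

variable {K L : Type*} [Field K] [Field L] [Algebra K L] [FiniteDimensional K L]
  [Algebra.IsSeparable K L]

theorem Algebra.traceForm_notMem_span_singleton {β γ : L} (h : γ ∉ K ∙ β) :
    Algebra.traceForm K L γ ∉ K ∙ Algebra.traceForm K L β := by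
  rw [Submodule.mem_span_singleton] at h ⊢
  rintro ⟨c, hc⟩
  refine h ⟨c, LinearMap.ker_eq_bot.mp (traceForm_nondegenerate K L).ker_eq_bot ?_⟩
  rw [map_smul, hc]

theorem Algebra.traceForm_ne_zero {β : L} (hβ : β ≠ 0) : Algebra.traceForm K L β ≠ 0 := by
  rw [Ne, ← map_zero (Algebra.traceForm K L)]
  exact fun h => hβ (LinearMap.ker_eq_bot.mp (traceForm_nondegenerate K L).ker_eq_bot h)

end TraceForm

section FiniteField

variable {K L : Type*} [Field K] [Fintype K] [DecidableEq K] [Field L] [Fintype L]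
  [Algebra K L] {β γ : L}

theorem card_trace_mul_eq_one_mul_card (hβ : β ≠ 0) :
    #{w : L | Algebra.trace K L (β * w) = 1} * Fintype.card K = Fintype.card L := by
  have hsurj := LinearMap.surjective_of_ne_zero (Algebra.traceForm_ne_zero (K := K) hβ)
  simpa using (Algebra.traceForm K L β).toAddMonoidHom.card_preimage_mul_card hsurj {1}

theorem card_trace_mul_eq_one_and_ne_zero_mul_card (hβ : β ≠ 0) (hγ : γ ∉ K ∙ β) :
    #{w : L | Algebra.trace K L (β * w) = 1 ∧ Algebra.trace K L (w * γ) ≠ 0}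
      * Fintype.card K ^ 2 = (Fintype.card K - 1) * Fintype.card L := by
  have hsurj := LinearMap.surjective_prod_of_notMem_span_singleton
    (Algebra.traceForm_ne_zero (K := K) hβ) (Algebra.traceForm_notMem_span_singleton hγ)
  have := AddMonoidHom.card_preimage_mul_card
    ((Algebra.traceForm K L β).prod (Algebra.traceForm K L γ)).toAddMonoidHom hsurj ({1} ×ˢ {0}ᶜ)
  simp only [card_product, card_singleton, card_compl, one_mul, Fintype.card_prod, ← sq] at this
  convert this using 3
  ext w
  simp [mul_comm w γ, eq_comm, and_comm]

end FiniteField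

theorem card_filter_eq_card_filter_apply_eq_one {K V : Type*} [Field K] [AddCommGroup V]
    [Module K V] [Fintype V] [DecidableEq V] [DecidableEq K] (f : V →ₗ[K] K) {h : V → K}
    (h_smul : ∀ c : K, c ≠ 0 → ∀ x, h (c • x) = h x) (h_ne : ∀ x, x ≠ 0 → h x ≠ 0)
    {D : Finset V} (hD : ∀ x, x ∈ D ↔ x ≠ 0 ∧ f x = h x)
    (P : V → Prop) [DecidablePred P] (hP : ∀ c : K, c ≠ 0 → ∀ x, P (c • x) ↔ P x) :
    #{x ∈ D | P x} = #{w | f w = 1 ∧ P w} := by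
  have hfD {x} (hx : x ∈ D) : f x ≠ 0 := by
    obtain ⟨hx0, hfx⟩ := (hD x).mp hx
    exact hfx ▸ h_ne x hx0
  have hw0 {w} (hw : f w = 1) : w ≠ 0 := by rintro rfl; simp at hw
  refine card_bij' (fun x _ => (f x)⁻¹ • x) (fun w _ => h w • w) ?_ ?_ ?_ ?_
  · intro x hx
    obtain ⟨hxD, hPx⟩ := mem_filter.mp hx
    simp only [mem_filter, mem_univ, map_smul, smul_eq_mul,
      inv_mul_cancel₀ (hfD hxD), hP _ (inv_ne_zero (hfD hxD)), hPx, and_self]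
  · intro w hw
    obtain ⟨hw1, hPw⟩ := (mem_filter.mp hw).2
    have hhw := h_ne w (hw0 hw1)
    refine mem_filter.mpr ⟨(hD _).mpr ⟨smul_ne_zero hhw (hw0 hw1), ?_⟩, (hP _ hhw w).mpr hPw⟩
    rw [map_smul, hw1, h_smul _ hhw, smul_eq_mul, mul_one]
  · intro x hx
    have hxD := (mem_filter.mp hx).1
    rw [h_smul _ (inv_ne_zero (hfD hxD)), ((hD x).mp hxD).2.symm, smul_smul,
      mul_inv_cancel₀ (hfD hxD), one_smul]
  · intro w hw
    obtain ⟨hw1, -⟩ := (mem_filter.mp hw).2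
    rw [map_smul, hw1, smul_eq_mul, mul_one, smul_smul, inv_mul_cancel₀ (h_ne w (hw0 hw1)),
      one_smul]

theorem Submodule.ncard_span_singleton {K V : Type*} [Field K] [AddCommGroup V] [Module K V]
    {v : V} (hv : v ≠ 0) : ((K ∙ v : Submodule K V) : Set V).ncard = Nat.card K := by
  rw [← Nat.card_coe_set_eq]
  exact Nat.card_congr (LinearEquiv.toSpanNonzeroSingleton K V v hv).toEquiv.symm

/-- The Hamming weight of the codeword `(Tr (d * γ))_{d ∈ D}`. -/
noncomputable def traceWeight (K : Type*) {L : Type*} [Field K] [DecidableEq K] [Field L]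
    [Algebra K L] (D : Finset L) (γ : L) : ℕ :=
  #{d ∈ D | Algebra.trace K L (d * γ) ≠ 0}

theorem traceWeight_of_mem_span {K L : Type*} [Field K] [DecidableEq K] [Field L] [Algebra K L]
    {β γ : L} {g : L → K} {D : Finset L} (g_ne : ∀ x, x ≠ 0 → g x ≠ 0)
    (hD : ∀ x, x ∈ D ↔ x ≠ 0 ∧ Algebra.trace K L (β * x) = g x) (hγ : γ ∈ K ∙ β) (hγ0 : γ ≠ 0) :
    traceWeight K D γ = #D := by
  obtain ⟨c, rfl⟩ := Submodule.mem_span_singleton.mp hγ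
  have hc : c ≠ 0 := by rintro rfl; simp at hγ0
  refine congrArg card (filter_true_of_mem fun x hx => ?_)
  obtain ⟨hx0, hx⟩ := (hD x).mp hx
  rw [mul_smul_comm, map_smul, mul_comm, hx, smul_eq_mul]
  exact mul_ne_zero hc (g_ne x hx0)

section TraceCode

variable {K L : Type*} [Field K] [Fintype K] [DecidableEq K] [Field L] [Fintype L]
  [DecidableEq L] [Algebra K L] {β : L} {g : L → K} {D : Finset L}
  (hβ : β ≠ 0) (g_smul : ∀ c : K, c ≠ 0 → ∀ x, g (c • x) = g x) (g_ne : ∀ x, x ≠ 0 → g x ≠ 0)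
  (hD : ∀ x, x ∈ D ↔ x ≠ 0 ∧ Algebra.trace K L (β * x) = g x)
include hβ g_smul g_ne hD

theorem card_mul_card_eq_card : #D * Fintype.card K = Fintype.card L := by
  have := card_filter_eq_card_filter_apply_eq_one (Algebra.traceForm K L β) g_smul g_ne hD
    (fun _ => True) (by simp)
  simp only [Finset.filter_true, and_true, Algebra.traceForm_apply] at this
  rw [this, card_trace_mul_eq_one_mul_card hβ]

theorem card_eq_div : #D = Fintype.card L / Fintype.card K :=
  (Nat.div_eq_of_eq_mul_left Fintype.card_pos (card_mul_card_eq_card hβ g_smul g_ne hD).symm).symm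

theorem sub_one_mul_card_div_sq_lt_card_div :
    (Fintype.card K - 1) * Fintype.card L / Fintype.card K ^ 2
      < Fintype.card L / Fintype.card K :=
  Nat.sub_one_mul_div_sq_lt_div Fintype.card_pos
    ⟨#D, by rw [← card_mul_card_eq_card hβ g_smul g_ne hD, mul_comm]⟩

theorem traceWeight_eq_of_mem_span {γ : L} (hγ : γ ∈ K ∙ β) (hγ0 : γ ≠ 0) :
    traceWeight K D γ = Fintype.card L / Fintype.card K :=
  (traceWeight_of_mem_span g_ne hD hγ hγ0).trans (card_eq_div hβ g_smul g_ne hD)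

theorem traceWeight_mul_card_sq_of_notMem_span {γ : L} (hγ : γ ∉ K ∙ β) :
    traceWeight K D γ * Fintype.card K ^ 2 = (Fintype.card K - 1) * Fintype.card L := by
  rw [traceWeight, card_filter_eq_card_filter_apply_eq_one (Algebra.traceForm K L β) g_smul g_ne hD]
  · exact card_trace_mul_eq_one_and_ne_zero_mul_card hβ hγ
  · intro c hc x
    rw [smul_mul_assoc, map_smul, smul_eq_mul, mul_ne_zero_iff, and_iff_right hc]

theorem traceWeight_eq_of_notMem_span {γ : L} (hγ : γ ∉ K ∙ β) :
    traceWeight K D γ = (Fintype.card K - 1) * Fintype.card L / Fintype.card K ^ 2 :=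
  (Nat.div_eq_of_eq_mul_left (pow_pos Fintype.card_pos 2)
    (traceWeight_mul_card_sq_of_notMem_span hβ g_smul g_ne hD hγ).symm).symm

theorem traceWeight_ne_zero {γ : L} (hγ0 : γ ≠ 0) : traceWeight K D γ ≠ 0 := by
  by_cases hγ : γ ∈ K ∙ β
  · rw [traceWeight_eq_of_mem_span hβ g_smul g_ne hD hγ hγ0]
    exact ((Nat.zero_le _).trans_lt (sub_one_mul_card_div_sq_lt_card_div hβ g_smul g_ne hD)).ne'
  · intro h0
    have := traceWeight_mul_card_sq_of_notMem_span hβ g_smul g_ne hD hγ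
    rw [h0, zero_mul, eq_comm, mul_eq_zero, Nat.sub_eq_zero_iff_le] at this
    exact this.elim (Fintype.one_lt_card (α := K)).not_ge Fintype.card_ne_zero

theorem traceCode_injective :
    Function.Injective (fun γ : L => fun d : {x // x ∈ D} => Algebra.trace K L ((d : L) * γ)) := by
  intro γ₁ γ₂ h12
  by_contra hne
  refine traceWeight_ne_zero hβ g_smul g_ne hD (sub_ne_zero.mpr hne)
    (card_eq_zero.mpr (filter_eq_empty_iff.mpr fun d hd => ?_))
  rw [mul_sub, map_sub, not_not, sub_eq_zero]
  exact congrFun h12 ⟨d, hd⟩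

theorem setOf_traceWeight_eq_div :
    {γ | γ ≠ 0 ∧ traceWeight K D γ = Fintype.card L / Fintype.card K}
      = ((K ∙ β : Submodule K L) : Set L) \ {0} := by
  ext γ
  by_cases hγ : γ ∈ K ∙ β
  · simp +contextual [hγ, traceWeight_eq_of_mem_span hβ g_smul g_ne hD hγ]
  · simp [hγ, traceWeight_eq_of_notMem_span hβ g_smul g_ne hD hγ,
      (sub_one_mul_card_div_sq_lt_card_div hβ g_smul g_ne hD).ne]

theorem setOf_traceWeight_eq_sub_one_mul_div :
    {γ | γ ≠ 0 ∧ traceWeight K D γ = (Fintype.card K - 1) * Fintype.card L / Fintype.card K ^ 2}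
      = ((K ∙ β : Submodule K L) : Set L)ᶜ := by
  ext γ
  by_cases hγ : γ ∈ K ∙ β
  · simp +contextual [hγ, traceWeight_eq_of_mem_span hβ g_smul g_ne hD hγ,
      (sub_one_mul_card_div_sq_lt_card_div hβ g_smul g_ne hD).ne']
  · simpa [hγ, traceWeight_eq_of_notMem_span hβ g_smul g_ne hD hγ] using
      fun h : γ = 0 => hγ (h ▸ zero_mem _)

theorem traceCode_weight_distribution :
    #D = Fintype.card L / Fintype.card K ∧
    Function.Injective (fun γ : L => fun d : {x // x ∈ D} => Algebra.trace K L ((d : L) * γ)) ∧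
    (∀ γ : L, γ ≠ 0 → traceWeight K D γ = Fintype.card L / Fintype.card K ∨
      traceWeight K D γ = (Fintype.card K - 1) * Fintype.card L / Fintype.card K ^ 2) ∧
    {γ : L | γ ≠ 0 ∧ traceWeight K D γ = Fintype.card L / Fintype.card K}.ncard
      = Fintype.card K - 1 ∧
    {γ : L | γ ≠ 0 ∧
      traceWeight K D γ = (Fintype.card K - 1) * Fintype.card L / Fintype.card K ^ 2}.ncard
      = Fintype.card L - Fintype.card K := by
  refine ⟨card_eq_div hβ g_smul g_ne hD, traceCode_injective hβ g_smul g_ne hD,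
    fun γ hγ0 => ?_, ?_, ?_⟩
  · by_cases hγ : γ ∈ K ∙ β
    exacts [Or.inl (traceWeight_eq_of_mem_span hβ g_smul g_ne hD hγ hγ0),
      Or.inr (traceWeight_eq_of_notMem_span hβ g_smul g_ne hD hγ)]
  · rw [setOf_traceWeight_eq_div hβ g_smul g_ne hD, Set.ncard_sdiff_singleton_of_mem (zero_mem _),
      Submodule.ncard_span_singleton hβ, Nat.card_eq_fintype_card]
  · rw [setOf_traceWeight_eq_sub_one_mul_div hβ g_smul g_ne hD, Set.ncard_compl,
      Submodule.ncard_span_singleton hβ, Nat.card_eq_fintype_card, Nat.card_eq_fintype_card]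

end TraceCode

theorem stmt_17_general
    (p ℓ m : ℕ) [Fact (Nat.Prime p)]
    (hℓ : Nat.Prime ℓ) (hm : 0 < m)
    (N : ℕ) (hN : N = 2 * ℓ ^ m)
    (hprim : orderOf (p : ZMod N) = Nat.totient N)
    (e : ℕ) (he : e = Nat.totient N) (he' : e = (ℓ - 1) * ℓ ^ (m - 1))
    (q : ℕ) (hq : q = p ^ e)
    (F : Type) [Field F] [Fintype F] [DecidableEq F] [Algebra (ZMod p) F]
    (hF : Fintype.card F = q)
    (α : ZMod p) (hα : α ≠ 0)
    (a₁ a₂ a₃ a₄ : ZMod p)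
    (ha₁ : a₁ = (ℓ : ZMod p) ^ (m - 1) * ((ℓ : ZMod p) - 1) - α)
    (ha₂ : a₂ = -((ℓ : ZMod p) ^ (m - 1) * ((ℓ : ZMod p) - 1)) - α)
    (ha₃ : a₃ = (ℓ : ZMod p) ^ (m - 1) - α)
    (ha₄ : a₄ = -(ℓ : ZMod p) ^ (m - 1) - α)
    (h₁ : a₁ ≠ 0) (h₂ : a₂ ≠ 0) (h₃ : a₃ ≠ 0) (h₄ : a₄ ≠ 0)
    (β : F) (hβ : β ≠ 0)
    (D : Finset F)
    (hD : D = Finset.univ.filter (fun x : F =>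
      x ≠ 0 ∧ Algebra.trace (ZMod p) F (x ^ ((q - 1) / N) + β * x) = α))
    :
    D.card = q / p ∧
    Function.Injective (fun γ : F => fun d : {x // x ∈ D} =>
      Algebra.trace (ZMod p) F ((d : F) * γ)) ∧
    (∀ γ : F, γ ≠ 0 →
      ((D.filter (fun d => Algebra.trace (ZMod p) F (d * γ) ≠ 0)).card) = q / p ∨ ((D.filter (fun d => Algebra.trace (ZMod p) F (d * γ) ≠ 0)).card) = (p - 1) * q / p ^ 2) ∧
    {γ : F | γ ≠ 0 ∧ ((D.filter (fun d => Algebra.trace (ZMod p) F (d * γ) ≠ 0)).card) = q / p}.ncard = p - 1 ∧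
    {γ : F | γ ≠ 0 ∧ ((D.filter (fun d => Algebra.trace (ZMod p) F (d * γ) ≠ 0)).card) = (p - 1) * q / p ^ 2}.ncard = q - p := by
  obtain ⟨m, rfl⟩ : ∃ m', m = m' + 1 := ⟨m - 1, by omega⟩
  subst hN he hq ha₁ ha₂ ha₃ ha₄
  simp only [Nat.add_sub_cancel, sub_ne_zero] at he' h₁ h₂ h₃ h₄
  have hℓ2 : ℓ ≠ 2 := Nat.ne_two_of_totient_two_mul_pow he'
  set N := 2 * ℓ ^ (m + 1)
  have hN : 2 < N := by
    have := Nat.one_lt_pow (n := m + 1) (by omega) hℓ.one_lt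
    omega
  have hfr : Module.finrank (ZMod p) F = φ N := by
    rw [Module.card_eq_pow_finrank (K := ZMod p), ZMod.card] at hF
    exact Nat.pow_right_injective (Fact.out : p.Prime).two_le hF
  have hdvd : N * (p - 1) ∣ p ^ φ N - 1 := Nat.mul_sub_one_dvd_pow_sub_one_of_dvd_geom_sum
    (Nat.dvd_geom_sum_of_orderOf_eq_totient hN hprim)
  obtain ⟨k, hk⟩ := Nat.dvd_div_of_mul_dvd hdvd
  set g : F → ZMod p := fun x => α - Algebra.trace (ZMod p) F (x ^ ((p ^ φ N - 1) / N))
  have g_smul (c : ZMod p) (hc : c ≠ 0) (x : F) : g (c • x) = g x := by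
    simp only [g, Algebra.smul_def, mul_pow, hk, pow_mul, ← map_pow,
      ZMod.pow_card_sub_one_eq_one hc, map_one, one_mul]
  have g_ne (x : F) (hx : x ≠ 0) : g x ≠ 0 := by
    have hy : (x ^ ((p ^ φ N - 1) / N)) ^ N = 1 := by
      rw [← pow_mul, Nat.div_mul_cancel (dvd_of_mul_right_dvd hdvd), ← hF]
      exact FiniteField.pow_card_sub_one_eq_one x hx
    rcases trace_eq_of_pow_eq_one hℓ hℓ2 (by rwa [Nat.card_zmod]) hfr hy with ht | ht | ht | ht | ht
      <;> simp only [g, ht, sub_ne_zero]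
    exacts [h₁.symm, h₂.symm, h₃.symm, h₄.symm, hα]
  have hD' (x : F) : x ∈ D ↔ x ≠ 0 ∧ Algebra.trace (ZMod p) F (β * x) = g x := by
    simp [hD, g, eq_sub_iff_add_eq, add_comm]
  have := traceCode_weight_distribution hβ g_smul g_ne hD'
  rw [ZMod.card, hF] at this
  exact this

theorem stmt_17
    (p ℓ m : ℕ) [Fact (Nat.Prime p)] (hp2 : p ≠ 2)
    (hℓ : Nat.Prime ℓ) (hℓp : ℓ ≠ p) (hm : 0 < m)
    (N : ℕ) (hN : N = 2 * ℓ ^ m)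
    (hprim : orderOf (p : ZMod N) = Nat.totient N)
    (e : ℕ) (he : e = Nat.totient N) (he' : e = (ℓ - 1) * ℓ ^ (m - 1))
    (q : ℕ) (hq : q = p ^ e)
    (F : Type) [Field F] [Fintype F] [DecidableEq F] [Algebra (ZMod p) F]
    (hF : Fintype.card F = q)
    (α : ZMod p) (hα : α ≠ 0)
    (a₁ a₂ a₃ a₄ : ZMod p)
    (ha₁ : a₁ = (ℓ : ZMod p) ^ (m - 1) * ((ℓ : ZMod p) - 1) - α)
    (ha₂ : a₂ = -((ℓ : ZMod p) ^ (m - 1) * ((ℓ : ZMod p) - 1)) - α)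
    (ha₃ : a₃ = (ℓ : ZMod p) ^ (m - 1) - α)
    (ha₄ : a₄ = -(ℓ : ZMod p) ^ (m - 1) - α)
    (h₁ : a₁ ≠ 0) (h₂ : a₂ ≠ 0) (h₃ : a₃ ≠ 0) (h₄ : a₄ ≠ 0)
    (β : F) (hβ : β ≠ 0)
    (D : Finset F)
    (hD : D = Finset.univ.filter (fun x : F =>
      x ≠ 0 ∧ Algebra.trace (ZMod p) F (x ^ ((q - 1) / N) + β * x) = α))
    :
    D.card = q / p ∧
    Function.Injective (fun γ : F => fun d : {x // x ∈ D} =>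
      Algebra.trace (ZMod p) F ((d : F) * γ)) ∧
    (∀ γ : F, γ ≠ 0 →
      ((D.filter (fun d => Algebra.trace (ZMod p) F (d * γ) ≠ 0)).card) = q / p ∨ ((D.filter (fun d => Algebra.trace (ZMod p) F (d * γ) ≠ 0)).card) = (p - 1) * q / p ^ 2) ∧
    {γ : F | γ ≠ 0 ∧ ((D.filter (fun d => Algebra.trace (ZMod p) F (d * γ) ≠ 0)).card) = q / p}.ncard = p - 1 ∧
    {γ : F | γ ≠ 0 ∧ ((D.filter (fun d => Algebra.trace (ZMod p) F (d * γ) ≠ 0)).card) = (p - 1) * q / p ^ 2}.ncard = q - p :=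
  stmt_17_general p ℓ m hℓ hm N hN hprim e he he' q hq F hF α hα a₁ a₂ a₃ a₄ ha₁ ha₂ ha₃ ha₄ h₁ h₂
    h₃ h₄ β hβ D hD
end
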